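/- arXiv:1502.01912 — 7 statements merged into one kernel-verified Lean document; each statement's English description precedes it below -/
import Mathlib

section
/- Let D:[0,x_G]→ℝ be strictly increasing and continuous with D(0)=0, such that D̂(x) := x − D(x) is strictly increasing, and, when x_G = +∞, lim_{x→∞} D(x) = +∞ and lim_{x→∞} D̂(x) = +∞. Let H3:[0,∞)→ℝ be continuous, strictly increasing, with H3(0)=0 and lim_{x→∞} H3(x) = x_G. Then the function H(x) := D̂^{-1}(H3(x)) − H3(x), defined for x ∈ [0, H3^{-1}(D̂(x_G))], is the unique continuous strictly increasing function with H(0)=0 such that H + H3 is a bijection from [0, H3^{-1}(D̂(x_G))] onto [0, x_G] and D(x) = H((H+H3)^{-1}(x)) for all x ∈ [0, x_G]. -/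
open Filter Set Topology
open scoped ENNReal

/-!
With `D̂ x = x - D x`, the conditions force `H + H₃ = D̂⁻¹ ∘ H₃ =: g`: indeed
`D (g z) = H z = g z - H₃ z` says exactly `D̂ (g z) = H₃ z`, and `D̂` is injective.
Conversely `g` is a strictly increasing bijection of `T` onto the interval `[0, x_G]`, hence
continuous, and `H = D ∘ g` is strictly increasing; `H₃` reaches every value of
`D̂ [0, x_G] ⊆ [0, x_G)` by the intermediate value theorem.
-/

section Order

variable {α β : Type*} [LinearOrder α] [LinearOrder β]

theorem StrictMonoOn.strictMonoOn_invFunOn_image [Nonempty α] {φ : α → β} {s : Set α}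
    (hφ : StrictMonoOn φ s) : StrictMonoOn (Function.invFunOn φ s) (φ '' s) := by
  rintro _ ⟨a, ha, rfl⟩ _ ⟨b, hb, rfl⟩ hab
  rw [hφ.injOn.leftInvOn_invFunOn ha, hφ.injOn.leftInvOn_invFunOn hb]
  exact (hφ.lt_iff_lt ha hb).1 hab

variable [TopologicalSpace α] [OrderTopology α] [DenselyOrdered β]

theorem StrictMonoOn.eventually_lt_of_ordConnected_image {f : α → β} {t : Set α}
    (hf : StrictMonoOn f t) (himg : (f '' t).OrdConnected) {a : α} (ha : a ∈ t) {b : β}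
    (hb : b < f a) : ∀ᶠ z in 𝓝[t] a, b < f z := by
  by_cases h : ∃ c ∈ t, c < a ∧ b < f c
  · obtain ⟨c, hc, hca, hbc⟩ := h
    filter_upwards [self_mem_nhdsWithin, mem_nhdsWithin_of_mem_nhds (Ioi_mem_nhds hca)]
      with z hz hcz
    exact hbc.trans (hf hc hz hcz)
  · push Not at h
    -- otherwise `f '' t` would skip the values strictly between `b` and `f a`
    have ha_min : ∀ c ∈ t, a ≤ c := by
      intro c hc
      by_contra! hca
      obtain ⟨y, hby, hya⟩ := exists_between hb
      obtain ⟨w, hw, rfl⟩ := himg.out (mem_image_of_mem f hc) (mem_image_of_mem f ha)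
        ⟨(h c hc hca).trans hby.le, hya.le⟩
      exact (h w hw ((hf.lt_iff_lt hw ha).1 hya)).not_gt hby
    filter_upwards [self_mem_nhdsWithin] with z hz
    exact hb.trans_le ((hf.le_iff_le ha hz).2 (ha_min z hz))

variable [TopologicalSpace β] [OrderTopology β]

theorem StrictMonoOn.continuousOn_of_ordConnected_image {f : α → β} {t : Set α}
    (hf : StrictMonoOn f t) (himg : (f '' t).OrdConnected) : ContinuousOn f t := fun _ ha =>
  tendsto_order.2 ⟨fun _ hb => hf.eventually_lt_of_ordConnected_image himg ha hb,
    fun _ hb => hf.dual.eventually_lt_of_ordConnected_image himg.dual ha hb⟩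

end Order

theorem mem_image_Ici_of_tendsto_ofReal {f : ℝ → ℝ} {a y : ℝ} {L : ℝ≥0∞}
    (hf : ContinuousOn f (Ici a)) (hlim : Tendsto (fun x => ENNReal.ofReal (f x)) atTop (𝓝 L))
    (hay : f a ≤ y) (hyL : ENNReal.ofReal y < L) : y ∈ f '' Ici a := by
  obtain ⟨z, hyz, haz⟩ := ((hlim.eventually_const_lt hyL).and (eventually_ge_atTop a)).exists
  exact image_mono Icc_subset_Ici_self <| intermediate_value_Icc haz
    (hf.mono Icc_subset_Ici_self) ⟨hay, ((ENNReal.ofReal_lt_ofReal_iff').1 hyz).1.le⟩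

theorem image_sub_subset_image_Ici {xG : ℝ≥0∞} (hxG : 0 < xG) {D H3 : ℝ → ℝ}
    (hDmono : StrictMonoOn D {x | 0 ≤ x ∧ ENNReal.ofReal x ≤ xG}) (hD0 : D 0 = 0)
    (hDhatMono : StrictMonoOn (fun x => x - D x) {x | 0 ≤ x ∧ ENNReal.ofReal x ≤ xG})
    (hH3cont : ContinuousOn H3 (Ici 0)) (hH30 : H3 0 = 0)
    (hH3lim : Tendsto (fun x => ENNReal.ofReal (H3 x)) atTop (𝓝 xG)) :
    (fun x => x - D x) '' {x | 0 ≤ x ∧ ENNReal.ofReal x ≤ xG} ⊆ H3 '' Ici 0 := by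
  rintro _ ⟨x, hx, rfl⟩
  have h0 : (0 : ℝ) ∈ {x | 0 ≤ x ∧ ENNReal.ofReal x ≤ xG} := ⟨le_rfl, by simp⟩
  refine mem_image_Ici_of_tendsto_ofReal hH3cont hH3lim ?_ ?_
  · simpa [hD0, hH30] using hDhatMono.monotoneOn h0 hx hx.1
  · rcases hx.1.eq_or_lt with rfl | hpos
    · simpa [hD0] using hxG
    calc ENNReal.ofReal (x - D x) < ENNReal.ofReal x :=
          (ENNReal.ofReal_lt_ofReal_iff hpos).2 (by linarith [hD0 ▸ hDmono h0 hx hpos])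
      _ ≤ xG := hx.2

def IsDistortionHazard (D H3 : ℝ → ℝ) (T S : Set ℝ) (H : ℝ → ℝ) : Prop :=
  ContinuousOn H T ∧ StrictMonoOn H T ∧ H 0 = 0 ∧
    BijOn (fun z => H z + H3 z) T S ∧ ∀ z ∈ T, D (H z + H3 z) = H z

section Hazard

variable {D H3 : ℝ → ℝ} {S T : Set ℝ}

theorem isDistortionHazard_invFunOn_sub (hS : S.OrdConnected) (h0S : 0 ∈ S)
    (hDmono : StrictMonoOn D S) (hD0 : D 0 = 0) (hDhatMono : StrictMonoOn (fun x => x - D x) S)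
    (hH3cont : ContinuousOn H3 T) (hH3mono : StrictMonoOn H3 T) (hH30 : H3 0 = 0)
    (hH3T : BijOn H3 T ((fun x => x - D x) '' S)) :
    IsDistortionHazard D H3 T S fun z => Function.invFunOn (fun x => x - D x) S (H3 z) - H3 z := by
  set φ : ℝ → ℝ := fun x => x - D x
  set g : ℝ → ℝ := fun z => Function.invFunOn φ S (H3 z)
  have hφ_bij : BijOn (Function.invFunOn φ S) (φ '' S) S :=
    hDhatMono.injOn.bijOn_image.symm hDhatMono.injOn.bijOn_image.invOn_invFunOn.symm
  have hg_bij : BijOn g T S := hφ_bij.comp hH3T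
  have hg_mono : StrictMonoOn g T :=
    hDhatMono.strictMonoOn_invFunOn_image.comp hH3mono hH3T.mapsTo
  have hDg : ∀ z ∈ T, D (g z) = g z - H3 z := fun z hz => by
    have : φ (g z) = H3 z := (surjOn_image φ S).rightInvOn_invFunOn (hH3T.mapsTo hz)
    simp only [φ] at this
    linarith
  have hg0 : g 0 = 0 := by
    have : φ 0 = 0 := by simp [φ, hD0]
    simpa [g, hH30, this] using hDhatMono.injOn.leftInvOn_invFunOn h0S
  refine ⟨?_, ?_, show g 0 - H3 0 = 0 by rw [hg0, hH30, sub_self], by simpa using hg_bij,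
    fun z hz => by simpa using hDg z hz⟩
  · exact (hg_mono.continuousOn_of_ordConnected_image (hg_bij.image_eq ▸ hS)).sub hH3cont
  · exact (hDmono.comp hg_mono hg_bij.mapsTo).congr hDg

theorem IsDistortionHazard.eqOn_invFunOn_sub {H : ℝ → ℝ}
    (hDhatInj : InjOn (fun x => x - D x) S) (hH : IsDistortionHazard D H3 T S H) :
    EqOn H (fun z => Function.invFunOn (fun x => x - D x) S (H3 z) - H3 z) T := by
  intro z hz
  obtain ⟨-, -, -, hbij, hDH⟩ := hH
  have hDhat : H z + H3 z - D (H z + H3 z) = H3 z := by rw [hDH z hz]; ring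
  have hinv := hDhatInj.leftInvOn_invFunOn (hbij.mapsTo hz)
  simp only [hDhat] at hinv
  simp only [hinv]
  ring

end Hazard

theorem AMO_hazard_from_distortion_general
    (xG : ℝ≥0∞) (hxG : 0 < xG)
    (D H3 : ℝ → ℝ) (S T : Set ℝ)
    (hS : S = {x : ℝ | 0 ≤ x ∧ ENNReal.ofReal x ≤ xG})
    (hDmono : StrictMonoOn D S) (hD0 : D 0 = 0)
    (hDhatMono : StrictMonoOn (fun x => x - D x) S)
    (hH3cont : ContinuousOn H3 (Set.Ici (0:ℝ))) (hH3mono : StrictMonoOn H3 (Set.Ici (0:ℝ)))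
    (hH30 : H3 0 = 0)
    (hH3lim : Tendsto (fun x : ℝ => ENNReal.ofReal (H3 x)) atTop (𝓝 xG))
    -- `T = [0, H₃⁻¹(D̂(x_G))] = {z ≥ 0 : H₃(z) ∈ D̂([0, x_G])}`
    (hT : T = {z : ℝ | 0 ≤ z ∧ ∃ x ∈ S, x - D x = H3 z}) :
    ∀ Hdef : ℝ → ℝ,
      (∀ z : ℝ, Hdef z = Function.invFunOn (fun x => x - D x) S (H3 z) - H3 z) →
      (ContinuousOn Hdef T ∧ StrictMonoOn Hdef T ∧ Hdef 0 = 0 ∧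
        Set.BijOn (fun z => Hdef z + H3 z) T S ∧
        (∀ z ∈ T, D (Hdef z + H3 z) = Hdef z)) ∧
      (∀ H' : ℝ → ℝ,
        (ContinuousOn H' T ∧ StrictMonoOn H' T ∧ H' 0 = 0 ∧
          Set.BijOn (fun z => H' z + H3 z) T S ∧
          (∀ z ∈ T, D (H' z + H3 z) = H' z)) →
        Set.EqOn H' Hdef T) := by
  intro Hdef hHdef
  obtain rfl : Hdef = _ := funext hHdef
  have h0S : (0 : ℝ) ∈ S := hS ▸ ⟨le_rfl, by simp⟩
  have hS_ord : S.OrdConnected := hS ▸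
    ⟨fun x hx y hy z hz => ⟨hx.1.trans hz.1, (ENNReal.ofReal_le_ofReal hz.2).trans hy.2⟩⟩
  have hT_nonneg : T ⊆ Ici 0 := fun z hz => (hT ▸ hz).1
  have hH3T : BijOn H3 T ((fun x => x - D x) '' S) := by
    refine ⟨fun z hz => (hT ▸ hz).2, (hH3mono.mono hT_nonneg).injOn, ?_⟩
    rintro _ ⟨x, hx, rfl⟩
    obtain ⟨z, hz, hzx⟩ := image_sub_subset_image_Ici hxG (hS ▸ hDmono) hD0 (hS ▸ hDhatMono)
      hH3cont hH30 hH3lim (mem_image_of_mem _ (hS ▸ hx))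
    exact ⟨z, hT ▸ ⟨hz, x, hx, hzx.symm⟩, hzx⟩
  exact ⟨isDistortionHazard_invFunOn_sub hS_ord h0S hDmono hD0 hDhatMono
      (hH3cont.mono hT_nonneg) (hH3mono.mono hT_nonneg) hH30 hH3T,
    fun _ hH => IsDistortionHazard.eqOn_invFunOn_sub hDhatMono.injOn hH⟩

/-- Lemma 1: given a distortion `D` on `[0, x_G]` (with `D̂(x) = x − D(x)`
strictly increasing, and `D`, `D̂` tending to `+∞` when `x_G = +∞`) and `H₃` continuous,
strictly increasing with `H₃(0) = 0` and limit `x_G`, the function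
`H(z) := D̂⁻¹(H₃(z)) − H₃(z)` on `T = [0, H₃⁻¹(D̂(x_G))]` is the unique continuous strictly
increasing function with `H(0) = 0` such that `H + H₃` maps `T` bijectively onto `[0, x_G]`
and `D(x) = H((H + H₃)⁻¹(x))` for all `x ∈ [0, x_G]`. -/
theorem AMO_hazard_from_distortion
    (xG : ℝ≥0∞) (hxG : 0 < xG)
    (D H3 : ℝ → ℝ) (S T : Set ℝ)
    (hS : S = {x : ℝ | 0 ≤ x ∧ ENNReal.ofReal x ≤ xG})
    (hDmono : StrictMonoOn D S) (hDcont : ContinuousOn D S) (hD0 : D 0 = 0)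
    (hDhatMono : StrictMonoOn (fun x => x - D x) S)
    (hDtop : xG = ⊤ → Tendsto D atTop atTop)
    (hDhatTop : xG = ⊤ → Tendsto (fun x => x - D x) atTop atTop)
    (hH3cont : ContinuousOn H3 (Set.Ici (0:ℝ))) (hH3mono : StrictMonoOn H3 (Set.Ici (0:ℝ)))
    (hH30 : H3 0 = 0)
    (hH3lim : Tendsto (fun x : ℝ => ENNReal.ofReal (H3 x)) atTop (𝓝 xG))
    -- `T = [0, H₃⁻¹(D̂(x_G))] = {z ≥ 0 : H₃(z) ∈ D̂([0, x_G])}`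
    (hT : T = {z : ℝ | 0 ≤ z ∧ ∃ x ∈ S, x - D x = H3 z}) :
    ∀ Hdef : ℝ → ℝ,
      (∀ z : ℝ, Hdef z = Function.invFunOn (fun x => x - D x) S (H3 z) - H3 z) →
      (ContinuousOn Hdef T ∧ StrictMonoOn Hdef T ∧ Hdef 0 = 0 ∧
        Set.BijOn (fun z => Hdef z + H3 z) T S ∧
        (∀ z ∈ T, D (Hdef z + H3 z) = Hdef z)) ∧
      (∀ H' : ℝ → ℝ,
        (ContinuousOn H' T ∧ StrictMonoOn H' T ∧ H' 0 = 0 ∧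
          Set.BijOn (fun z => H' z + H3 z) T S ∧
          (∀ z ∈ T, D (H' z + H3 z) = H' z)) →
        Set.EqOn H' Hdef T) :=
  AMO_hazard_from_distortion_general xG hxG D H3 S T hS hDmono hD0 hDhatMono hH3cont hH3mono hH30
    hH3lim hT
end

section
/- Let b ∈ (0, +∞], and let ψ:[0,b)→ℝ be continuous, strictly increasing, with ψ(0)=0, and differentiable on (0,b). Let A, B:[0,b)→ℝ with B continuous, strictly increasing and B(0)=0, and suppose there is a function c:(0,b)→(0,∞) such that for every y ∈ (0,b) and every x ∈ (0, c(y)) with B(x)+y < b, the functional equation A(ψ(x)) + ψ(y) = ψ(B(x)+y) holds. Then there exists m > 0 such that ψ(y) = m·y for all y ∈ [0,b). -/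
/-!
Fix `y₁, y₂ ∈ (0, b)`. Since `B` is continuous with `B 0 = 0` and strictly increasing, every
small `t > 0` is a value `B x` with `x` small, and the functional equation at `y₁` and at `y₂`
gives `ψ (y₁ + t) - ψ y₁ = A (ψ x) = ψ (y₂ + t) - ψ y₂`. Dividing by `t` and letting `t → 0⁺`,
`ψ'` is constant, say `m`, on `(0, b)`; the mean value theorem on `[0, y]` together with
`ψ 0 = 0` gives `ψ y = m y`, and `m > 0` because `ψ` is strictly increasing.
-/

open Filter Set Topology
open scoped ENNReal

theorem HasDerivAt.eq_of_eventually_sub_eq {F : Type*} [NormedAddCommGroup F] [NormedSpace ℝ F]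
    {f : ℝ → F} {f₁ f₂ : F} {x₁ x₂ : ℝ} (h₁ : HasDerivAt f f₁ x₁) (h₂ : HasDerivAt f f₂ x₂)
    (h : ∀ᶠ t in 𝓝[>] (0 : ℝ), f (x₁ + t) - f x₁ = f (x₂ + t) - f x₂) : f₁ = f₂ := by
  have hslope : ∀ {x f'}, HasDerivAt f f' x →
      Tendsto (fun t ↦ t⁻¹ • (f (x + t) - f x)) (𝓝[>] 0) (𝓝 f') := fun hf ↦
    (hasDerivAt_iff_tendsto_slope_zero.mp hf).mono_left (nhdsWithin_mono _ fun _ ht ↦ ne_of_gt ht)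
  refine tendsto_nhds_unique ((hslope h₁).congr' ?_) (hslope h₂)
  filter_upwards [h] with t ht
  rw [ht]

theorem sub_eq_mul_sub_of_hasDerivAt {f : ℝ → ℝ} {m a b : ℝ} (hab : a < b)
    (hf : ContinuousOn f (Icc a b)) (hd : ∀ x ∈ Ioo a b, HasDerivAt f m x) :
    f b - f a = m * (b - a) := by
  obtain ⟨_, _, hm⟩ := exists_hasDerivAt_eq_slope f (fun _ ↦ m) hab hf hd
  rw [hm, div_mul_cancel₀ _ (sub_ne_zero.mpr hab.ne')]

theorem ContinuousOn.image_Ioo_mem_nhdsGT {f : ℝ → ℝ} {a b : ℝ} (hf : ContinuousOn f (Icc a b))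
    (hab : a ≤ b) (hfab : f a < f b) : f '' Ioo a b ∈ 𝓝[>] (f a) :=
  mem_of_superset (Ioo_mem_nhdsGT hfab) (intermediate_value_Ioo hab hf)

theorem Icc_zero_subset_of_ofReal_lt {b : ℝ≥0∞} {y : ℝ} (hy : ENNReal.ofReal y < b) :
    Icc 0 y ⊆ {z : ℝ | 0 ≤ z ∧ ENNReal.ofReal z < b} :=
  fun _ hz ↦ ⟨hz.1, (ENNReal.ofReal_le_ofReal hz.2).trans_lt hy⟩

theorem exists_pos_ofReal_lt {b : ℝ≥0∞} (hb : 0 < b) : ∃ y : ℝ, 0 < y ∧ ENNReal.ofReal y < b := by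
  obtain ⟨y, -, hy, hyb⟩ := ENNReal.lt_iff_exists_real_btwn.mp hb
  exact ⟨y, ENNReal.ofReal_pos.mp hy, hyb⟩

section FunctionalEquation

variable {b : ℝ≥0∞} {ψ A B c : ℝ → ℝ}

theorem eventually_sub_eq_of_functional_eq {y ε : ℝ} (hy : ENNReal.ofReal y < b)
    (heq : ∀ x, 0 < x → x < ε → ENNReal.ofReal (B x + y) < b → A (ψ x) + ψ y = ψ (B x + y)) :
    ∀ᶠ t in 𝓝[>] (0 : ℝ), ∀ x ∈ Ioo 0 ε, B x = t → ψ (y + t) - ψ y = A (ψ x) := by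
  have hdom : ∀ᶠ t in 𝓝 (0 : ℝ), ENNReal.ofReal (t + y) < b := by
    have hcont : Continuous fun t : ℝ ↦ ENNReal.ofReal (t + y) :=
      ENNReal.continuous_ofReal.comp (continuous_add_const y)
    exact hcont.continuousAt.eventually (isOpen_Iio.mem_nhds (by simpa using hy))
  filter_upwards [nhdsWithin_le_nhds hdom] with t ht x hx hBx
  subst hBx
  rw [add_comm y, ← heq x hx.1 hx.2 ht, add_sub_cancel_right]

theorem eventually_sub_eq_sub_of_functional_eq
    (hBcont : ContinuousOn B {y | 0 ≤ y ∧ ENNReal.ofReal y < b})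
    (hBmono : StrictMonoOn B {y | 0 ≤ y ∧ ENNReal.ofReal y < b}) (hB0 : B 0 = 0)
    (hcpos : ∀ y : ℝ, 0 < y → ENNReal.ofReal y < b → 0 < c y)
    (heq : ∀ y x : ℝ, 0 < y → ENNReal.ofReal y < b → 0 < x → x < c y →
      ENNReal.ofReal (B x + y) < b → A (ψ x) + ψ y = ψ (B x + y))
    {y₁ y₂ : ℝ} (hy₁ : 0 < y₁) (hy₁b : ENNReal.ofReal y₁ < b)
    (hy₂ : 0 < y₂) (hy₂b : ENNReal.ofReal y₂ < b) :
    ∀ᶠ t in 𝓝[>] (0 : ℝ), ψ (y₁ + t) - ψ y₁ = ψ (y₂ + t) - ψ y₂ := by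
  -- `ε ≤ y₁` keeps `[0, ε]` inside the domain of `B`.
  set ε := min (min (c y₁) (c y₂)) y₁
  have hε : 0 < ε := lt_min (lt_min (hcpos y₁ hy₁ hy₁b) (hcpos y₂ hy₂ hy₂b)) hy₁
  have hIcc : Icc 0 ε ⊆ {y | 0 ≤ y ∧ ENNReal.ofReal y < b} :=
    (Icc_subset_Icc_right (min_le_right _ _)).trans (Icc_zero_subset_of_ofReal_lt hy₁b)
  have hBε : B 0 < B ε := hBmono (hIcc ⟨le_rfl, hε.le⟩) (hIcc ⟨hε.le, le_rfl⟩) hε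
  have himage := (hBcont.mono hIcc).image_Ioo_mem_nhdsGT hε.le hBε
  rw [hB0] at himage
  have hε₁ : ε ≤ c y₁ := (min_le_left _ _).trans (min_le_left _ _)
  have hε₂ : ε ≤ c y₂ := (min_le_left _ _).trans (min_le_right _ _)
  filter_upwards [himage,
    eventually_sub_eq_of_functional_eq hy₁b fun x hx hxε ↦ heq y₁ x hy₁ hy₁b hx (hxε.trans_le hε₁),
    eventually_sub_eq_of_functional_eq hy₂b fun x hx hxε ↦ heq y₂ x hy₂ hy₂b hx (hxε.trans_le hε₂)]
    with t ⟨x, hx, hBx⟩ h₁ h₂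
  rw [h₁ x hx hBx, h₂ x hx hBx]

end FunctionalEquation

/-- the key step in the proof of Theorem 3.4. If `ψ : [0,b) → ℝ` is
continuous, strictly increasing, `ψ(0) = 0`, differentiable on `(0,b)`, `B` is continuous,
strictly increasing with `B(0) = 0`, and for every `y ∈ (0,b)` and every `x ∈ (0, c(y))`
with `B(x) + y < b` one has `A(ψ(x)) + ψ(y) = ψ(B(x) + y)`, then `ψ(y) = m y` on `[0,b)`
for some `m > 0`. Here `b ∈ (0, +∞]` is encoded as an extended nonnegative real and
`[0,b) = {y : 0 ≤ y, y < b}`. -/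
theorem psi_linear_of_functional_eq
    (b : ℝ≥0∞) (hb : 0 < b) (ψ A B c : ℝ → ℝ) (S : Set ℝ)
    (hS : S = {y : ℝ | 0 ≤ y ∧ ENNReal.ofReal y < b})
    (hψcont : ContinuousOn ψ S) (hψmono : StrictMonoOn ψ S) (hψ0 : ψ 0 = 0)
    (hψdiff : ∀ y : ℝ, 0 < y → ENNReal.ofReal y < b → DifferentiableAt ℝ ψ y)
    (hBcont : ContinuousOn B S) (hBmono : StrictMonoOn B S) (hB0 : B 0 = 0)
    (hcpos : ∀ y : ℝ, 0 < y → ENNReal.ofReal y < b → 0 < c y)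
    (heq : ∀ y x : ℝ, 0 < y → ENNReal.ofReal y < b → 0 < x → x < c y →
      ENNReal.ofReal (B x + y) < b → A (ψ x) + ψ y = ψ (B x + y)) :
    ∃ m : ℝ, 0 < m ∧ ∀ y : ℝ, 0 ≤ y → ENNReal.ofReal y < b → ψ y = m * y := by
  subst hS
  obtain ⟨y₀, hy₀, hy₀b⟩ := exists_pos_ofReal_lt hb
  have hderiv : ∀ y, 0 < y → ENNReal.ofReal y < b → HasDerivAt ψ (deriv ψ y₀) y := by
    intro y hy hyb
    have hψy := (hψdiff y hy hyb).hasDerivAt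
    rwa [hψy.eq_of_eventually_sub_eq (hψdiff y₀ hy₀ hy₀b).hasDerivAt
      (eventually_sub_eq_sub_of_functional_eq hBcont hBmono hB0 hcpos heq hy hyb hy₀ hy₀b)] at hψy
  have hlin : ∀ y : ℝ, 0 ≤ y → ENNReal.ofReal y < b → ψ y = deriv ψ y₀ * y := by
    intro y hy hyb
    rcases hy.eq_or_lt with rfl | hy
    · rw [hψ0, mul_zero]
    · have := sub_eq_mul_sub_of_hasDerivAt hy (hψcont.mono (Icc_zero_subset_of_ofReal_lt hyb))
        fun x hx ↦ hderiv x hx.1 ((ENNReal.ofReal_le_ofReal hx.2.le).trans_lt hyb)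
      rwa [hψ0, sub_zero, sub_zero] at this
  refine ⟨deriv ψ y₀, ?_, hlin⟩
  have hψy₀ := hψmono (Icc_zero_subset_of_ofReal_lt hy₀b ⟨le_rfl, hy₀.le⟩)
    (Icc_zero_subset_of_ofReal_lt hy₀b ⟨hy₀.le, le_rfl⟩) hy₀
  rw [hψ0, hlin y₀ hy₀.le hy₀b] at hψy₀
  exact (mul_pos_iff_of_pos_right hy₀).mp hψy₀
end

section
/- Let D1, D2 be distortions relative to G with D1(x_G) ≥ D2(x_G), let C_AMO be the associated Archimedean-based Marshall-Olkin copula, and let μ be a probability measure on [0,1]² such that μ([0,u]×[0,v]) = C_AMO(u,v) for all (u,v) ∈ [0,1]². Then for every t ∈ (0,1), the Kendall function of C_AMO satisfies μ({(u,v) ∈ [0,1]² : C_AMO(u,v) ≤ t}) = K_G(t) + G′(G^{-1}(t))·T^{-1}(G^{-1}(t)), where K_G(t) = t − G′(G^{-1}(t))·G^{-1}(t) and T(x) = D̂1^{-1}(x) + D̂2^{-1}(x) − x. -/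
open MeasureTheory Filter Set Topology
open scoped ENNReal

/-- `x_G := inf {x ≥ 0 : G x = 0}`, an extended nonnegative real (`⊤` if `G` never vanishes). -/
noncomputable def xG (G : ℝ → ℝ) : ℝ≥0∞ :=
  sInf {y : ℝ≥0∞ | ∃ x : ℝ, 0 ≤ x ∧ G x = 0 ∧ y = ENNReal.ofReal x}

/-- The interval `[0, x_G]` as a subset of `ℝ` (all of `[0,∞)` when `x_G = +∞`). -/
def distortionDomain (G : ℝ → ℝ) : Set ℝ :=
  {x : ℝ | 0 ≤ x ∧ ENNReal.ofReal x ≤ xG G}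

/-- The hypotheses on the Archimedean generator `G`: `G(0) = 1`, `G : [0,∞) → [0,1]`,
`G` is differentiable on `(0,∞)` with non-positive, non-decreasing and concave derivative,
and `G` is strictly decreasing on `[0, x_G)`. -/
structure IsGenerator (G : ℝ → ℝ) : Prop where
  one_at_zero : G 0 = 1
  mem_Icc : ∀ x : ℝ, 0 ≤ x → G x ∈ Set.Icc (0:ℝ) 1
  diff : ∀ x ∈ Set.Ioi (0:ℝ), DifferentiableAt ℝ G x
  deriv_nonpos : ∀ x ∈ Set.Ioi (0:ℝ), deriv G x ≤ 0
  deriv_mono : MonotoneOn (deriv G) (Set.Ioi (0:ℝ))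
  deriv_concave : ConcaveOn ℝ (Set.Ioi (0:ℝ)) (deriv G)
  strictAnti : ∀ a b : ℝ, 0 ≤ a → a < b → ENNReal.ofReal b < xG G → G b < G a

/-- `Ginv` is the inverse of `G`, mapping `(0,1]` onto `[0, x_G)`. -/
structure IsGenInv (G Ginv : ℝ → ℝ) : Prop where
  nonneg : ∀ u ∈ Set.Ioc (0:ℝ) 1, 0 ≤ Ginv u
  le_xG : ∀ u ∈ Set.Ioc (0:ℝ) 1, ENNReal.ofReal (Ginv u) ≤ xG G
  right_inv : ∀ u ∈ Set.Ioc (0:ℝ) 1, G (Ginv u) = u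
  left_inv : ∀ x : ℝ, 0 ≤ x → ENNReal.ofReal x < xG G → Ginv (G x) = x

/-- A distortion relative to `G`: a strictly increasing continuous function on `[0, x_G]`
with `D(0) = 0`, such that `D̂(x) = x − D(x)` is also strictly increasing and, when
`x_G = +∞`, both `D` and `D̂` tend to `+∞`. -/
structure IsDistortion (G D : ℝ → ℝ) : Prop where
  strictMono : StrictMonoOn D (distortionDomain G)
  cont : ContinuousOn D (distortionDomain G)
  zero : D 0 = 0
  hatStrictMono : StrictMonoOn (fun x => x - D x) (distortionDomain G)
  tendsto_top : xG G = ⊤ → Filter.Tendsto D Filter.atTop Filter.atTop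
  hat_tendsto_top : xG G = ⊤ → Filter.Tendsto (fun x => x - D x) Filter.atTop Filter.atTop

/-- `C` is the Archimedean-based Marshall-Olkin copula with generator `G` (with inverse
`Ginv`) and distortions `D1`, `D2`, where `f = D̂₂⁻¹ ∘ D̂₁` and `finv = D̂₁⁻¹ ∘ D̂₂`:
it vanishes on the boundary `u = 0` or `v = 0`, and on `(0,1]²` it is given by the
two-case piecewise formula of Definition 3.3, the case being selected according to
whether `D₁(x_G) ≥ D₂(x_G)` or `D₁(x_G) < D₂(x_G)`. -/
def AMOSpec (G Ginv D1 D2 f finv : ℝ → ℝ) (C : ℝ → ℝ → ℝ) : Prop :=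
  (∀ u : ℝ, C u 0 = 0 ∧ C 0 u = 0) ∧
  ((xG G ≠ ⊤ → D2 ((xG G).toReal) ≤ D1 ((xG G).toReal)) →
    ∀ u ∈ Set.Ioc (0:ℝ) 1, ∀ v ∈ Set.Ioc (0:ℝ) 1,
      (v ≤ G (f (Ginv u)) → C u v = G (D1 (Ginv u) + Ginv v)) ∧
      (G (f (Ginv u)) < v → C u v = G (Ginv u + D2 (Ginv v)))) ∧
  ((xG G ≠ ⊤ ∧ D1 ((xG G).toReal) < D2 ((xG G).toReal)) →
    ∀ u ∈ Set.Ioc (0:ℝ) 1, ∀ v ∈ Set.Ioc (0:ℝ) 1,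
      (G (finv (Ginv v)) ≤ u → C u v = G (D1 (Ginv u) + Ginv v)) ∧
      (u < G (finv (Ginv v)) → C u v = G (Ginv u + D2 (Ginv v))))


/-!
In generator coordinates `x = G⁻¹(u)`, `w = G⁻¹(v)` the AMO copula is
`G (max (D₁ x + w) (x + D₂ w))`: the branch condition `v ≤ h(u)` says exactly `D̂₁(x) ≤ D̂₂(w)`.
Hence, for `a = G⁻¹(t)`, the level curve `C = t` is the broken line
`max (D₁ x + w) (x + D₂ w) = a`, with a corner `(x₀, w₀)` where `D₁ x₀ + w₀ = x₀ + D₂ w₀ = a`;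
there `D̂₁(x₀) = D̂₂(w₀)` and `T(D̂₁ x₀) = a`, so `T⁻¹(a) = a - D₁ x₀ - D₂ w₀`.

Since `μ([0,u] × [0,v]) = C(u,v)`, the mass of a union of rectangles whose upper right corners
form a staircase telescopes into copula values. Take `k` steps on each side of the corner, of
equal size in `D₂ w` below it and in `D₁ x` above it: then every inner corner of the staircase has
copula value `G(a + δ)` and every outer one `G(a - δ)`, with `δ = D₂ w₀ / k` or `D₁ x₀ / k`.
The inner and outer staircases squeeze `μ{C ≤ t}` between
`t + k (t - G(a + D₂ w₀/k)) + k (t - G(a + D₁ x₀/k))` and the analogous sum with `a - ·`, and both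
tend to `t - G'(a) (D₁ x₀ + D₂ w₀) = t - G'(a) a + G'(a) T⁻¹(a)`.
-/

namespace IsGenerator

variable {G : ℝ → ℝ} (hG : IsGenerator G)
include hG

theorem antitoneOn : AntitoneOn G (Ici 0) := by
  have hpos : AntitoneOn G (Ioi 0) :=
    antitoneOn_of_deriv_nonpos (convex_Ioi 0)
      (fun x hx => (hG.diff x hx).continuousAt.continuousWithinAt)
      (fun x hx => (hG.diff x (interior_subset hx)).differentiableWithinAt)
      (fun x hx => hG.deriv_nonpos x (interior_subset hx))
  intro x hx y hy hxy
  rcases (mem_Ici.1 hx).eq_or_lt with rfl | hx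
  · rw [hG.one_at_zero]
    exact (hG.mem_Icc y hy).2
  · exact hpos hx (hx.trans_le hxy) hxy

theorem pos_of_ofReal_lt_xG {x : ℝ} (hx : 0 ≤ x) (hxG : ENNReal.ofReal x < xG G) : 0 < G x :=
  (hG.mem_Icc x hx).1.lt_of_ne fun h => hxG.not_ge (sInf_le ⟨x, hx, h.symm, rfl⟩)

/-- By continuity `G` stays positive up to some `y > x`, and every zero of `G` lies beyond `y`. -/
theorem ofReal_lt_xG {x : ℝ} (hx : 0 < x) (hGx : 0 < G x) : ENNReal.ofReal x < xG G := by
  obtain ⟨y, hxy, hGy⟩ :=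
    ((hG.diff x hx).continuousAt.eventually (lt_mem_nhds hGx)).exists_gt
  refine (ENNReal.ofReal_lt_ofReal_iff (hx.trans hxy)).2 hxy |>.trans_le (le_sInf ?_)
  rintro _ ⟨z, hz, hGz, rfl⟩
  refine ENNReal.ofReal_le_ofReal (le_of_not_ge fun hzy => ?_)
  have := hG.antitoneOn (mem_Ici.2 hz) (mem_Ici.2 (hx.trans hxy).le) hzy
  linarith

theorem apply_lt_apply {x y : ℝ} (hx : 0 ≤ x) (hxy : x < y) (hy : 0 < G y) : G y < G x :=
  hG.strictAnti x y hx hxy (hG.ofReal_lt_xG (hx.trans_lt hxy) hy)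

end IsGenerator

theorem zero_mem_distortionDomain (G : ℝ → ℝ) : (0 : ℝ) ∈ distortionDomain G :=
  ⟨le_rfl, by simp⟩

theorem Icc_subset_distortionDomain {G : ℝ → ℝ} {b : ℝ} (hb : b ∈ distortionDomain G) :
    Icc 0 b ⊆ distortionDomain G :=
  fun _ hx => ⟨hx.1, (ENNReal.ofReal_le_ofReal hx.2).trans hb.2⟩

theorem mem_distortionDomain_of_le {G : ℝ → ℝ} {a x : ℝ} (ha : a ∈ distortionDomain G)
    (hx : 0 ≤ x) (hxa : x ≤ a) : x ∈ distortionDomain G :=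
  Icc_subset_distortionDomain ha ⟨hx, hxa⟩

namespace IsDistortion

variable {G D : ℝ → ℝ} (hD : IsDistortion G D)
include hD

theorem nonneg {x : ℝ} (hx : x ∈ distortionDomain G) : 0 ≤ D x := by
  simpa [hD.zero] using hD.strictMono.monotoneOn (zero_mem_distortionDomain G) hx hx.1

theorem le_self {x : ℝ} (hx : x ∈ distortionDomain G) : D x ≤ x := by
  simpa [hD.zero] using hD.hatStrictMono.monotoneOn (zero_mem_distortionDomain G) hx hx.1

theorem mem_image_Icc {b c : ℝ} (hb : b ∈ distortionDomain G) (hc : c ∈ Icc 0 (D b)) :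
    c ∈ D '' Icc 0 b :=
  intermediate_value_Icc hb.1 (hD.cont.mono (Icc_subset_distortionDomain hb)) (by rwa [hD.zero])

theorem hat_mem_image_Icc {b c : ℝ} (hb : b ∈ distortionDomain G) (hc : c ∈ Icc 0 (b - D b)) :
    c ∈ (fun x => x - D x) '' Icc 0 b :=
  intermediate_value_Icc hb.1
    ((continuousOn_id.sub hD.cont).mono (Icc_subset_distortionDomain hb)) (by simpa [hD.zero])

theorem invFunOn_hat {x : ℝ} (hx : x ∈ distortionDomain G) :
    Function.invFunOn (fun w => w - D w) (distortionDomain G) (x - D x) = x :=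
  hD.hatStrictMono.injOn.leftInvOn_invFunOn hx

theorem invFunOn_Icc_mem {b c : ℝ} (hb : b ∈ distortionDomain G) (hc : c ∈ Icc 0 (D b)) :
    Function.invFunOn D (Icc 0 b) c ∈ Icc 0 b ∧ D (Function.invFunOn D (Icc 0 b) c) = c :=
  ⟨Function.invFunOn_mem (hD.mem_image_Icc hb hc), Function.invFunOn_eq (hD.mem_image_Icc hb hc)⟩

theorem invFunOn_Icc_apply {b x : ℝ} (hb : b ∈ distortionDomain G) (hx : x ∈ Icc 0 b) :
    Function.invFunOn D (Icc 0 b) (D x) = x :=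
  (hD.strictMono.mono (Icc_subset_distortionDomain hb)).injOn.leftInvOn_invFunOn hx

theorem invFunOn_Icc_le {b c c' : ℝ} (hb : b ∈ distortionDomain G) (hc : c ∈ Icc 0 (D b))
    (hc' : c' ∈ Icc 0 (D b)) (hcc' : c ≤ c') :
    Function.invFunOn D (Icc 0 b) c ≤ Function.invFunOn D (Icc 0 b) c' := by
  have hsub := Icc_subset_distortionDomain hb
  obtain ⟨hg, hDg⟩ := hD.invFunOn_Icc_mem hb hc
  obtain ⟨hg', hDg'⟩ := hD.invFunOn_Icc_mem hb hc'
  exact (hD.strictMono.le_iff_le (hsub hg) (hsub hg')).1 (hDg.symm ▸ hDg'.symm ▸ hcc')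

end IsDistortion

/-- The hypothesis `D₂(x_G) ≤ D₁(x_G)` makes `D̂₂` reach every value of `D̂₁`, so that
`f = D̂₂⁻¹ ∘ D̂₁` is defined on all of `[0, x_G]`. -/
theorem hat_mem_image_hat {G D1 D2 : ℝ → ℝ} (hD1 : IsDistortion G D1) (hD2 : IsDistortion G D2)
    (hcase : xG G ≠ ⊤ → D2 ((xG G).toReal) ≤ D1 ((xG G).toReal)) {x : ℝ}
    (hx : x ∈ distortionDomain G) :
    x - D1 x ∈ (fun w => w - D2 w) '' distortionDomain G := by
  obtain ⟨b, hb, hxb⟩ : ∃ b ∈ distortionDomain G, x - D1 x ≤ b - D2 b := by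
    by_cases htop : xG G = ⊤
    · obtain ⟨b, hb, hb0⟩ := (((hD2.hat_tendsto_top htop).eventually_ge_atTop (x - D1 x)).and
        (eventually_ge_atTop 0)).exists
      exact ⟨b, ⟨hb0, by simp [htop]⟩, hb⟩
    · have hxG : (xG G).toReal ∈ distortionDomain G :=
        ⟨ENNReal.toReal_nonneg, by rw [ENNReal.ofReal_toReal htop]⟩
      have hxle : x ≤ (xG G).toReal := (ENNReal.ofReal_le_iff_le_toReal htop).1 hx.2
      refine ⟨_, hxG, ?_⟩
      linarith [hD1.hatStrictMono.monotoneOn hx hxG hxle, hcase htop]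
  exact image_mono (Icc_subset_distortionDomain hb)
    (hD2.hat_mem_image_Icc hb ⟨by linarith [hD1.le_self hx], hxb⟩)

/-- The argument of `G` in the AMO copula, in generator coordinates `x = G⁻¹(u)`, `w = G⁻¹(v)`. -/
def amoArg (D1 D2 : ℝ → ℝ) (x w : ℝ) : ℝ := max (D1 x + w) (x + D2 w)

/-- The branch `v ≤ h(u)` of the AMO copula is exactly `D̂₁(x) ≤ D̂₂(w)`. -/
theorem AMOSpec.eq_G_amoArg {G Ginv D1 D2 f finv : ℝ → ℝ} {C : ℝ → ℝ → ℝ}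
    (hG : IsGenerator G) (hGinv : IsGenInv G Ginv)
    (hD1 : IsDistortion G D1) (hD2 : IsDistortion G D2)
    (hcase : xG G ≠ ⊤ → D2 ((xG G).toReal) ≤ D1 ((xG G).toReal))
    (hf : ∀ x : ℝ, f x = Function.invFunOn (fun w => w - D2 w) (distortionDomain G) (x - D1 x))
    (hC : AMOSpec G Ginv D1 D2 f finv C) {u v : ℝ} (hu : u ∈ Ioc 0 1) (hv : v ∈ Ioc 0 1) :
    C u v = G (amoArg D1 D2 (Ginv u) (Ginv v)) := by
  set x := Ginv u
  set w := Ginv v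
  have hw : w ∈ distortionDomain G := ⟨hGinv.nonneg v hv, hGinv.le_xG v hv⟩
  have hGw : G w = v := hGinv.right_inv v hv
  have hex := hat_mem_image_hat hD1 hD2 hcase ⟨hGinv.nonneg u hu, hGinv.le_xG u hu⟩
  have hfx : f x ∈ distortionDomain G := hf x ▸ Function.invFunOn_mem hex
  have hfx_hat : f x - D2 (f x) = x - D1 x := hf x ▸ Function.invFunOn_eq hex
  obtain ⟨hleft, hright⟩ := hC.2.1 hcase u hu v hv
  rcases le_or_gt v (G (f x)) with hvf | hfv
  · have hfw : f x ≤ w := le_of_not_gt fun hwf =>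
      (hG.apply_lt_apply hw.1 hwf (hv.1.trans_le hvf)).not_ge (hGw ▸ hvf)
    have := hD2.hatStrictMono.monotoneOn hfx hw hfw
    rw [hleft hvf, amoArg, max_eq_left (by linarith)]
  · have hwf : w < f x := hG.antitoneOn.reflect_lt hfx.1 hw.1 (hGw ▸ hfv)
    have := hD2.hatStrictMono.monotoneOn hw hfx hwf.le
    rw [hright hfv, amoArg, max_eq_right (by linarith)]

theorem amoArg_nonneg {G D1 : ℝ → ℝ} (hD1 : IsDistortion G D1) (D2 : ℝ → ℝ) {x w : ℝ}
    (hx : x ∈ distortionDomain G) (hw : w ∈ distortionDomain G) : 0 ≤ amoArg D1 D2 x w :=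
  le_max_of_le_left (add_nonneg (hD1.nonneg hx) hw.1)

section amoArg

variable {G D1 D2 : ℝ → ℝ} (hD1 : IsDistortion G D1) (hD2 : IsDistortion G D2)
include hD1 hD2

theorem amoArg_lt_amoArg {x x' w w' : ℝ} (hx : x ∈ distortionDomain G)
    (hx' : x' ∈ distortionDomain G) (hw : w ∈ distortionDomain G)
    (hw' : w' ∈ distortionDomain G) (hxx' : x < x') (hww' : w < w') :
    amoArg D1 D2 x w < amoArg D1 D2 x' w' := by
  unfold amoArg
  exact max_lt (by linarith [hD1.strictMono hx hx' hxx', le_max_left (D1 x' + w') (x' + D2 w')])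
    (by linarith [hD2.strictMono hw hw' hww', le_max_right (D1 x' + w') (x' + D2 w')])

variable {x₀ w₀ : ℝ} (hx₀ : x₀ ∈ distortionDomain G) (hw₀ : w₀ ∈ distortionDomain G)
  (hcross : x₀ - D1 x₀ = w₀ - D2 w₀)
include hx₀ hw₀ hcross

theorem amoArg_eq_add_right {x w : ℝ} (hx : x ∈ distortionDomain G)
    (hw : w ∈ distortionDomain G) (hxx₀ : x₀ ≤ x) (hww₀ : w ≤ w₀) :
    amoArg D1 D2 x w = x + D2 w := by
  have := hD1.hatStrictMono.monotoneOn hx₀ hx hxx₀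
  have := hD2.hatStrictMono.monotoneOn hw hw₀ hww₀
  exact max_eq_right (by linarith)

theorem amoArg_eq_add_left {x w : ℝ} (hx : x ∈ distortionDomain G)
    (hw : w ∈ distortionDomain G) (hxx₀ : x ≤ x₀) (hww₀ : w₀ ≤ w) :
    amoArg D1 D2 x w = D1 x + w := by
  have := hD1.hatStrictMono.monotoneOn hx hx₀ hxx₀
  have := hD2.hatStrictMono.monotoneOn hw₀ hw hww₀
  exact max_eq_left (by linarith)

end amoArg

theorem exists_corner {G D1 D2 : ℝ → ℝ} (hD1 : IsDistortion G D1) (hD2 : IsDistortion G D2)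
    {a : ℝ} (ha : a ∈ distortionDomain G) :
    ∃ x₀ w₀, x₀ ∈ Icc 0 a ∧ w₀ ∈ Icc 0 a ∧ D1 x₀ + w₀ = a ∧ x₀ + D2 w₀ = a := by
  have hsub := Icc_subset_distortionDomain ha
  have hmaps : MapsTo (fun x => a - D1 x) (Icc 0 a) (Icc 0 a) := fun x hx =>
    ⟨by linarith [hD1.le_self (hsub hx), hx.2], by linarith [hD1.nonneg (hsub hx)]⟩
  have hcont : ContinuousOn (fun x => (a - D1 x) - D2 (a - D1 x) - (x - D1 x)) (Icc 0 a) :=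
    ((continuousOn_const.sub (hD1.cont.mono hsub)).sub
      (hD2.cont.comp (continuousOn_const.sub (hD1.cont.mono hsub)) (hmaps.mono_right hsub))).sub
      (continuousOn_id.sub (hD1.cont.mono hsub))
  obtain ⟨x₀, hx₀, hF⟩ := intermediate_value_Icc' ha.1 hcont (show (0:ℝ) ∈ Icc _ _ from
    ⟨by linarith [hD2.nonneg (hsub (hmaps ⟨ha.1, le_rfl⟩))],
      by simpa [hD1.zero] using hD2.le_self ha⟩)
  exact ⟨x₀, a - D1 x₀, hx₀, hmaps hx₀, by ring, by simp only at hF; linarith⟩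

theorem monotoneOn_Iic_of_le_succ {α : Type*} [Preorder α] {f : ℕ → α} {n : ℕ}
    (hf : ∀ i < n, f i ≤ f (i + 1)) : MonotoneOn f (Iic n) := by
  intro i _ j hj hij
  induction hij with
  | refl => exact le_rfl
  | step _ ih => exact (ih (Nat.le_of_succ_le hj)).trans (hf _ hj)

theorem antitoneOn_Iic_of_succ_le {α : Type*} [Preorder α] {f : ℕ → α} {n : ℕ}
    (hf : ∀ i < n, f (i + 1) ≤ f i) : AntitoneOn f (Iic n) :=
  monotoneOn_Iic_of_le_succ (α := αᵒᵈ) hf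

theorem forall_lt_add_of_forall_lt {P : ℕ → Prop} {k m : ℕ} (h₁ : ∀ i < k, P i)
    (h₂ : ∀ j < m, P (k + j)) : ∀ i < k + m, P i := fun i hi => by
  rcases lt_or_ge i k with hik | hki
  · exact h₁ i hik
  · obtain ⟨j, rfl⟩ := Nat.exists_eq_add_of_le hki
    exact h₂ j (by omega)

theorem forall_le_add_of_forall_le {P : ℕ → Prop} {k m : ℕ} (h₁ : ∀ i ≤ k, P i)
    (h₂ : ∀ j ≤ m, P (k + j)) : ∀ i ≤ k + m, P i := fun i hi => by
  rcases le_total i k with hik | hki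
  · exact h₁ i hik
  · obtain ⟨j, rfl⟩ := Nat.exists_eq_add_of_le hki
    exact h₂ j (by omega)

theorem exists_seq_concat {α : Type*} (p q : ℕ → α) {k : ℕ} (h : p k = q 0) :
    ∃ r : ℕ → α, (∀ i ≤ k, r i = p i) ∧ ∀ j, r (k + j) = q j := by
  refine ⟨fun i => if i ≤ k then p i else q (i - k), fun i hi => if_pos hi, fun j => ?_⟩
  rcases j.eq_zero_or_pos with rfl | hj
  · simp [h]
  · simp [show ¬ k + j ≤ k by omega]

theorem nat_mul_div_mem_Icc {c : ℝ} (hc : 0 ≤ c) {i k : ℕ} (hk : 0 < k) (hi : i ≤ k) :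
    (i : ℝ) * (c / k) ∈ Icc 0 c := by
  refine ⟨by positivity, ?_⟩
  rw [mul_div_assoc', div_le_iff₀ (by exact_mod_cast hk), mul_comm c]
  exact mul_le_mul_of_nonneg_right (by exact_mod_cast hi) hc

section Staircase

variable {G D1 D2 : ℝ → ℝ} (hD1 : IsDistortion G D1) (hD2 : IsDistortion G D2)
  {a x₀ w₀ : ℝ} (ha : a ∈ distortionDomain G) (hx₀ : x₀ ∈ Icc 0 a) (hw₀ : w₀ ∈ Icc 0 a)
  (h1 : D1 x₀ + w₀ = a) (h2 : x₀ + D2 w₀ = a) {k : ℕ} (hk : 0 < k)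
include hD1 hD2 ha hx₀ hw₀ h1 h2 hk

theorem exists_lower_piece : ∃ wA : ℕ → ℝ, wA 0 = 0 ∧ wA k = w₀ ∧
    (∀ i < k, wA i ≤ wA (i + 1)) ∧ (∀ i ≤ k, wA i ∈ Icc 0 a) ∧
    ∀ i ≤ k, ∀ j ≤ k, amoArg D1 D2 (a - i * (D2 w₀ / k)) (wA j) = a + (j - i) * (D2 w₀ / k) := by
  have hdom : ∀ {y}, 0 ≤ y → y ≤ a → y ∈ distortionDomain G := mem_distortionDomain_of_le ha
  have hw₀d := hdom hw₀.1 hw₀.2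
  have hδ : ∀ i ≤ k, (i : ℝ) * (D2 w₀ / k) ∈ Icc 0 (D2 w₀) :=
    fun i => nat_mul_div_mem_Icc (hD2.nonneg hw₀d) hk
  have hg := fun i hi => hD2.invFunOn_Icc_mem hw₀d (hδ i hi)
  refine ⟨fun i => Function.invFunOn D2 (Icc 0 w₀) (i * (D2 w₀ / k)), ?_, ?_,
    fun i hi => hD2.invFunOn_Icc_le hw₀d (hδ i hi.le) (hδ (i + 1) hi) ?_,
    fun i hi => ⟨(hg i hi).1.1, (hg i hi).1.2.trans hw₀.2⟩, fun i hi j hj => ?_⟩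
  · simpa [hD2.zero] using hD2.invFunOn_Icc_apply hw₀d (x := 0) ⟨le_rfl, hw₀.1⟩
  · simp only
    rw [mul_div_cancel₀ _ (by exact_mod_cast hk.ne')]
    exact hD2.invFunOn_Icc_apply hw₀d ⟨hw₀.1, le_rfl⟩
  · push_cast
    linarith [(hδ 1 hk).1]
  · have hi' := hδ i hi
    rw [amoArg_eq_add_right hD1 hD2 (hdom hx₀.1 hx₀.2) hw₀d (by linarith)
      (hdom (by linarith [hi'.2, hx₀.1]) (by linarith [hi'.1]))
      (hdom (hg j hj).1.1 ((hg j hj).1.2.trans hw₀.2)) (by linarith [hi'.2]) (hg j hj).1.2,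
      (hg j hj).2]
    ring

theorem exists_upper_piece : ∃ xB : ℕ → ℝ, xB 0 = x₀ ∧ xB k = 0 ∧
    (∀ j < k, xB (j + 1) ≤ xB j) ∧ (∀ j ≤ k, xB j ∈ Icc 0 a) ∧
    ∀ i ≤ k, ∀ j ≤ k, amoArg D1 D2 (xB i) (w₀ + j * (D1 x₀ / k)) = a + (j - i) * (D1 x₀ / k) := by
  have hdom : ∀ {y}, 0 ≤ y → y ≤ a → y ∈ distortionDomain G := mem_distortionDomain_of_le ha
  have hx₀d := hdom hx₀.1 hx₀.2
  have hε : ∀ j ≤ k, (j : ℝ) * (D1 x₀ / k) ∈ Icc 0 (D1 x₀) :=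
    fun j => nat_mul_div_mem_Icc (hD1.nonneg hx₀d) hk
  have hε' : ∀ j ≤ k, D1 x₀ - j * (D1 x₀ / k) ∈ Icc 0 (D1 x₀) :=
    fun j hj => ⟨by linarith [(hε j hj).2], by linarith [(hε j hj).1]⟩
  have hg := fun j hj => hD1.invFunOn_Icc_mem hx₀d (hε' j hj)
  refine ⟨fun j => Function.invFunOn D1 (Icc 0 x₀) (D1 x₀ - j * (D1 x₀ / k)), ?_, ?_,
    fun j hj => hD1.invFunOn_Icc_le hx₀d (hε' (j + 1) hj) (hε' j hj.le) ?_,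
    fun j hj => ⟨(hg j hj).1.1, (hg j hj).1.2.trans hx₀.2⟩, fun i hi j hj => ?_⟩
  · simpa using hD1.invFunOn_Icc_apply hx₀d ⟨hx₀.1, le_rfl⟩
  · simp only
    rw [mul_div_cancel₀ _ (by exact_mod_cast hk.ne'), sub_self]
    simpa [hD1.zero] using hD1.invFunOn_Icc_apply hx₀d (x := 0) ⟨le_rfl, hx₀.1⟩
  · push_cast
    linarith [(hε 1 hk).1]
  · have hj' := hε j hj
    rw [amoArg_eq_add_left hD1 hD2 hx₀d (hdom hw₀.1 hw₀.2) (by linarith)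
      (hdom (hg i hi).1.1 ((hg i hi).1.2.trans hx₀.2))
      (hdom (by linarith [hj'.1, hw₀.1]) (by linarith [hj'.2])) (hg i hi).1.2
      (by linarith [hj'.1]), (hg i hi).2]
    linarith

theorem exists_staircase : ∃ x w : ℕ → ℝ,
    AntitoneOn x (Iic (k + k)) ∧ MonotoneOn w (Iic (k + k)) ∧ w 0 = 0 ∧ x (k + k) = 0 ∧
    (∀ i ≤ k + k, x i ∈ Icc 0 a ∧ w i ∈ Icc 0 a) ∧
    (∀ i ≤ k + k, amoArg D1 D2 (x i) (w i) = a) ∧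
    (∀ i < k, amoArg D1 D2 (x i) (w (i + 1)) = a + D2 w₀ / k ∧
      amoArg D1 D2 (x (i + 1)) (w i) = a - D2 w₀ / k) ∧
    (∀ j < k, amoArg D1 D2 (x (k + j)) (w (k + j + 1)) = a + D1 x₀ / k ∧
      amoArg D1 D2 (x (k + j + 1)) (w (k + j)) = a - D1 x₀ / k) := by
  obtain ⟨wA, hwA0, hwAk, hwA_mono, hwA_mem, hA⟩ :=
    exists_lower_piece hD1 hD2 ha hx₀ hw₀ h1 h2 hk
  obtain ⟨xB, hxB0, hxBk, hxB_anti, hxB_mem, hB⟩ :=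
    exists_upper_piece hD1 hD2 ha hx₀ hw₀ h1 h2 hk
  have hδ : ∀ {i : ℕ}, i ≤ k → (i : ℝ) * (D2 w₀ / k) ∈ Icc 0 (D2 w₀) :=
    nat_mul_div_mem_Icc (hD2.nonneg (mem_distortionDomain_of_le ha hw₀.1 hw₀.2)) hk
  have hε : ∀ {j : ℕ}, j ≤ k → (j : ℝ) * (D1 x₀ / k) ∈ Icc 0 (D1 x₀) :=
    nat_mul_div_mem_Icc (hD1.nonneg (mem_distortionDomain_of_le ha hx₀.1 hx₀.2)) hk
  obtain ⟨x, hxA, hxB⟩ := exists_seq_concat (fun i : ℕ => a - i * (D2 w₀ / k)) xB (by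
    rw [hxB0, mul_div_cancel₀ _ (by exact_mod_cast hk.ne')]
    linarith)
  obtain ⟨w, hwA, hwB⟩ := exists_seq_concat (k := k) wA (fun j : ℕ => w₀ + j * (D1 x₀ / k))
    (by simp [hwAk])
  have hAamo : ∀ i ≤ k, ∀ j ≤ k, amoArg D1 D2 (x i) (w j) = a + (j - i) * (D2 w₀ / k) :=
    fun i hi j hj => by rw [hxA i hi, hwA j hj]; exact hA i hi j hj
  have hBamo : ∀ i ≤ k, ∀ j ≤ k,
      amoArg D1 D2 (x (k + i)) (w (k + j)) = a + (j - i) * (D1 x₀ / k) :=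
    fun i hi j hj => by rw [hxB i, hwB j]; exact hB i hi j hj
  refine ⟨x, w, antitoneOn_Iic_of_succ_le (forall_lt_add_of_forall_lt (fun i hi => ?_)
    (fun j hj => ?_)), monotoneOn_Iic_of_le_succ (forall_lt_add_of_forall_lt (fun i hi => ?_)
    (fun j hj => ?_)), by rw [hwA 0 k.zero_le, hwA0], by rw [hxB k, hxBk],
    forall_le_add_of_forall_le (fun i hi => ?_) (fun j hj => ?_),
    forall_le_add_of_forall_le (fun i hi => by rw [hAamo i hi i hi]; ring)
      (fun j hj => by rw [hBamo j hj j hj]; ring), fun i hi => ?_, fun j hj => ?_⟩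
  · rw [hxA (i + 1) hi, hxA i hi.le]
    push_cast
    linarith [(hδ hk).1]
  · rw [add_assoc, hxB (j + 1), hxB j]
    exact hxB_anti j hj
  · rw [hwA i hi.le, hwA (i + 1) hi]
    exact hwA_mono i hi
  · rw [add_assoc, hwB j, hwB (j + 1)]
    push_cast
    linarith [(hε hk).1]
  · rw [hxA i hi, hwA i hi]
    exact ⟨⟨by linarith [(hδ hi).2, hx₀.1], by linarith [(hδ hi).1]⟩, hwA_mem i hi⟩
  · rw [hxB j, hwB j]
    exact ⟨hxB_mem j hj, by linarith [(hε hj).1, hw₀.1], by linarith [(hε hj).2]⟩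
  · rw [hAamo i hi.le (i + 1) hi, hAamo (i + 1) hi i hi.le]
    push_cast
    constructor <;> ring
  · rw [add_assoc, hBamo j hj.le (j + 1) hj, hBamo (j + 1) hj j hj.le]
    push_cast
    constructor <;> ring

end Staircase

theorem measureReal_biUnion_Icc_prod_Icc {μ : Measure (ℝ × ℝ)} [IsFiniteMeasure μ]
    {U V : ℕ → ℝ} {n : ℕ} (hU : MonotoneOn U (Iic n)) (hV : AntitoneOn V (Iic n)) :
    μ.real (⋃ i ≤ n, Icc 0 (U i) ×ˢ Icc 0 (V i)) = μ.real (Icc 0 (U 0) ×ˢ Icc 0 (V 0)) +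
      ∑ i ∈ Finset.range n, (μ.real (Icc 0 (U (i + 1)) ×ˢ Icc 0 (V (i + 1))) -
        μ.real (Icc 0 (U i) ×ˢ Icc 0 (V (i + 1)))) := by
  induction n with
  | zero => simp
  | succ n ih =>
    have hn : n ∈ Iic (n + 1) := Nat.le_succ n
    have hinter : (⋃ i ≤ n, Icc 0 (U i) ×ˢ Icc 0 (V i)) ∩
        Icc 0 (U (n + 1)) ×ˢ Icc 0 (V (n + 1)) = Icc 0 (U n) ×ˢ Icc 0 (V (n + 1)) := by
      apply Subset.antisymm
      · rintro p ⟨hp, hp'⟩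
        obtain ⟨i, hi, hpi⟩ := mem_iUnion₂.1 hp
        exact ⟨⟨hpi.1.1, hpi.1.2.trans (hU (hi.trans (Nat.le_succ n)) hn hi)⟩, hp'.2⟩
      · rintro p ⟨hp1, hp2⟩
        refine ⟨mem_iUnion₂.2 ⟨n, le_rfl, hp1, hp2.1,
          hp2.2.trans (hV hn (mem_Iic.2 le_rfl) (Nat.le_succ n))⟩,
          ⟨hp1.1, hp1.2.trans (hU hn (mem_Iic.2 le_rfl) (Nat.le_succ n))⟩, hp2⟩
    have hunion := measureReal_union_add_inter (μ := μ)
      (s := ⋃ i ≤ n, Icc 0 (U i) ×ˢ Icc 0 (V i)) (t := Icc 0 (U (n + 1)) ×ˢ Icc 0 (V (n + 1)))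
      (measurableSet_Icc.prod measurableSet_Icc) (measure_ne_top μ _) (measure_ne_top μ _)
    rw [hinter, ih (hU.mono (Iic_subset_Iic.2 (Nat.le_succ n)))
      (hV.mono (Iic_subset_Iic.2 (Nat.le_succ n)))] at hunion
    rw [biUnion_le_succ, Finset.sum_range_succ]
    linarith

section MaxForm

variable {G Ginv D1 D2 : ℝ → ℝ} {C : ℝ → ℝ → ℝ}
  (hG : IsGenerator G) (hGinv : IsGenInv G Ginv)
  (hCG : ∀ u ∈ Ioc (0:ℝ) 1, ∀ v ∈ Ioc (0:ℝ) 1, C u v = G (amoArg D1 D2 (Ginv u) (Ginv v)))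
include hG hGinv hCG

theorem copula_nonneg (hD1 : IsDistortion G D1) (hC0 : ∀ u : ℝ, C u 0 = 0 ∧ C 0 u = 0)
    {u v : ℝ} (hu : u ∈ Icc (0:ℝ) 1) (hv : v ∈ Icc (0:ℝ) 1) : 0 ≤ C u v := by
  rcases hu.1.eq_or_lt with rfl | hu0
  · exact (hC0 v).2.ge
  rcases hv.1.eq_or_lt with rfl | hv0
  · exact (hC0 u).1.ge
  have hu' : u ∈ Ioc (0:ℝ) 1 := ⟨hu0, hu.2⟩
  have hv' : v ∈ Ioc (0:ℝ) 1 := ⟨hv0, hv.2⟩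
  rw [hCG u hu' v hv']
  exact (hG.mem_Icc _ (amoArg_nonneg hD1 D2 ⟨hGinv.nonneg u hu', hGinv.le_xG u hu'⟩
    ⟨hGinv.nonneg v hv', hGinv.le_xG v hv'⟩)).1

theorem copula_G_G_eq {x w : ℝ} (hx : 0 ≤ x) (hxG : ENNReal.ofReal x < xG G) (hw : 0 ≤ w)
    (hwG : ENNReal.ofReal w < xG G) : C (G x) (G w) = G (amoArg D1 D2 x w) := by
  rw [hCG _ ⟨hG.pos_of_ofReal_lt_xG hx hxG, (hG.mem_Icc x hx).2⟩
    _ ⟨hG.pos_of_ofReal_lt_xG hw hwG, (hG.mem_Icc w hw).2⟩,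
    hGinv.left_inv x hx hxG, hGinv.left_inv w hw hwG]

theorem lt_copula (hD1 : IsDistortion G D1) (hD2 : IsDistortion G D2) {a x₀ w₀ u v : ℝ}
    (hx₀ : x₀ ∈ distortionDomain G) (hw₀ : w₀ ∈ distortionDomain G)
    (hx₀w₀ : amoArg D1 D2 x₀ w₀ ≤ a) (hGa : 0 < G a)
    (hu : u ∈ Ioc (G x₀) 1) (hv : v ∈ Ioc (G w₀) 1) : G a < C u v := by
  have hu' : u ∈ Ioc (0:ℝ) 1 := ⟨(hG.mem_Icc x₀ hx₀.1).1.trans_lt hu.1, hu.2⟩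
  have hv' : v ∈ Ioc (0:ℝ) 1 := ⟨(hG.mem_Icc w₀ hw₀.1).1.trans_lt hv.1, hv.2⟩
  have hx : Ginv u ∈ distortionDomain G := ⟨hGinv.nonneg u hu', hGinv.le_xG u hu'⟩
  have hw : Ginv v ∈ distortionDomain G := ⟨hGinv.nonneg v hv', hGinv.le_xG v hv'⟩
  have hxx₀ : Ginv u < x₀ :=
    hG.antitoneOn.reflect_lt hx₀.1 hx.1 (by rw [hGinv.right_inv u hu']; exact hu.1)
  have hww₀ : Ginv v < w₀ :=
    hG.antitoneOn.reflect_lt hw₀.1 hw.1 (by rw [hGinv.right_inv v hv']; exact hv.1)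
  rw [hCG u hu' v hv']
  exact hG.apply_lt_apply (amoArg_nonneg hD1 D2 hx hw)
    ((amoArg_lt_amoArg hD1 hD2 hx hx₀ hw hw₀ hxx₀ hww₀).trans_le hx₀w₀) hGa

/-- Above the outer staircase `(G (x (i + 1)), G (w i))` the copula exceeds `G a`. -/
theorem sublevel_subset_biUnion (hD1 : IsDistortion G D1) (hD2 : IsDistortion G D2) {a : ℝ}
    (ha : ENNReal.ofReal a < xG G) (hGa : 0 < G a) {n : ℕ} {x w : ℕ → ℝ}
    (hx : AntitoneOn x (Iic n)) (hmem : ∀ i ≤ n, x i ∈ Icc 0 a ∧ w i ∈ Icc 0 a)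
    (hcurve : ∀ i ≤ n, amoArg D1 D2 (x i) (w i) = a) (hn : 0 < n) (hw0 : w 0 = 0)
    (hxn : x n = 0) :
    {p : ℝ × ℝ | p.1 ∈ Icc (0:ℝ) 1 ∧ p.2 ∈ Icc (0:ℝ) 1 ∧ C p.1 p.2 ≤ G a} ⊆
      ⋃ i < n, Icc 0 (G (x (i + 1))) ×ˢ Icc 0 (G (w i)) := by
  have hdom : ∀ {y}, y ∈ Icc 0 a → y ∈ distortionDomain G :=
    fun hy => ⟨hy.1, (ENNReal.ofReal_le_ofReal hy.2).trans ha.le⟩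
  rintro p ⟨hp1, hp2, hpC⟩
  have hex : ∃ j, p.1 ≤ G (x j) := ⟨n, by rw [hxn, hG.one_at_zero]; exact hp1.2⟩
  have hj := Nat.find_spec hex
  have hjn : Nat.find hex ≤ n := Nat.find_min' hex (by rw [hxn, hG.one_at_zero]; exact hp1.2)
  rw [mem_iUnion₂]
  rcases h : Nat.find hex with _ | i
  · rw [h] at hj
    refine ⟨0, hn, ⟨hp1.1, hj.trans ?_⟩, hp2.1, ?_⟩
    · exact hG.antitoneOn (hmem 1 hn).1.1 (hmem 0 (Nat.zero_le _)).1.1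
        (hx (mem_Iic.2 (Nat.zero_le _)) (mem_Iic.2 hn) zero_le_one)
    · rw [hw0, hG.one_at_zero]
      exact hp2.2
  · rw [h] at hj hjn
    have hxi : G (x i) < p.1 := not_le.1 (Nat.find_min hex (by omega))
    refine ⟨i, by omega, ⟨hp1.1, hj⟩, hp2.1, le_of_not_gt fun hwi => hpC.not_gt ?_⟩
    exact lt_copula hG hGinv hCG hD1 hD2 (hdom (hmem i (by omega)).1)
      (hdom (hmem i (by omega)).2) (hcurve i (by omega)).le hGa ⟨hxi, hp1.2⟩ ⟨hwi, hp2.2⟩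

end MaxForm

section Sublevel

variable {G Ginv D1 D2 : ℝ → ℝ} {C : ℝ → ℝ → ℝ} {μ : Measure (ℝ × ℝ)}
  (hG : IsGenerator G) (hGinv : IsGenInv G Ginv) (hD1 : IsDistortion G D1)
  (hC0 : ∀ u : ℝ, C u 0 = 0 ∧ C 0 u = 0)
  (hCG : ∀ u ∈ Ioc (0:ℝ) 1, ∀ v ∈ Ioc (0:ℝ) 1, C u v = G (amoArg D1 D2 (Ginv u) (Ginv v)))
  (hμ : ∀ u ∈ Set.Icc (0:ℝ) 1, ∀ v ∈ Set.Icc (0:ℝ) 1,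
      μ (Set.Icc 0 u ×ˢ Set.Icc 0 v) = ENNReal.ofReal (C u v))
include hG hGinv hD1 hC0 hCG hμ

theorem measureReal_Icc_prod_Icc {u v : ℝ} (hu : u ∈ Icc (0:ℝ) 1) (hv : v ∈ Icc (0:ℝ) 1) :
    μ.real (Icc 0 u ×ˢ Icc 0 v) = C u v := by
  rw [measureReal_def, hμ u hu v hv,
    ENNReal.toReal_ofReal (copula_nonneg hG hGinv hCG hD1 hC0 hu hv)]

theorem measureReal_Icc_G_prod_Icc_G {a x w : ℝ} (ha : ENNReal.ofReal a < xG G)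
    (hx : x ∈ Icc 0 a) (hw : w ∈ Icc 0 a) :
    μ.real (Icc 0 (G x) ×ˢ Icc 0 (G w)) = G (amoArg D1 D2 x w) := by
  have hlt : ∀ {y}, y ∈ Icc 0 a → ENNReal.ofReal y < xG G :=
    fun hy => (ENNReal.ofReal_le_ofReal hy.2).trans_lt ha
  rw [measureReal_Icc_prod_Icc hG hGinv hD1 hC0 hCG hμ (hG.mem_Icc x hx.1) (hG.mem_Icc w hw.1),
    copula_G_G_eq hG hGinv hCG hx.1 (hlt hx) hw.1 (hlt hw)]

variable [IsFiniteMeasure μ] {a : ℝ} (ha : ENNReal.ofReal a < xG G)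
include ha

section StaircaseBounds

variable {n : ℕ} {x w : ℕ → ℝ}
  (hx : AntitoneOn x (Iic n)) (hw : MonotoneOn w (Iic n))
  (hmem : ∀ i ≤ n, x i ∈ Icc 0 a ∧ w i ∈ Icc 0 a)
  (hcurve : ∀ i ≤ n, amoArg D1 D2 (x i) (w i) = a)
include hx hw hmem hcurve

/-- The rectangles under the staircase `(G (x i), G (w i))` lie in the sublevel set. -/
theorem le_measureReal_sublevel :
    G a + ∑ i ∈ Finset.range n, (G a - G (amoArg D1 D2 (x i) (w (i + 1)))) ≤
      μ.real {p : ℝ × ℝ | p.1 ∈ Icc (0:ℝ) 1 ∧ p.2 ∈ Icc (0:ℝ) 1 ∧ C p.1 p.2 ≤ G a} := by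
  have hGmem : ∀ {y}, y ∈ Icc 0 a → G y ∈ Icc (0:ℝ) 1 := fun hy => hG.mem_Icc _ hy.1
  have hrect : ∀ i ≤ n, ∀ j ≤ n,
      μ.real (Icc 0 (G (x i)) ×ˢ Icc 0 (G (w j))) = G (amoArg D1 D2 (x i) (w j)) :=
    fun i hi j hj => measureReal_Icc_G_prod_Icc_G hG hGinv hD1 hC0 hCG hμ ha (hmem i hi).1
      (hmem j hj).2
  have hsub : (⋃ i ≤ n, Icc 0 (G (x i)) ×ˢ Icc 0 (G (w i))) ⊆
      {p : ℝ × ℝ | p.1 ∈ Icc (0:ℝ) 1 ∧ p.2 ∈ Icc (0:ℝ) 1 ∧ C p.1 p.2 ≤ G a} := by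
    simp only [iUnion_subset_iff]
    rintro i hi p ⟨hp1, hp2⟩
    have hp1' : p.1 ∈ Icc (0:ℝ) 1 := ⟨hp1.1, hp1.2.trans (hGmem (hmem i hi).1).2⟩
    have hp2' : p.2 ∈ Icc (0:ℝ) 1 := ⟨hp2.1, hp2.2.trans (hGmem (hmem i hi).2).2⟩
    refine ⟨hp1', hp2', ?_⟩
    calc C p.1 p.2 = μ.real (Icc 0 p.1 ×ˢ Icc 0 p.2) :=
          (measureReal_Icc_prod_Icc hG hGinv hD1 hC0 hCG hμ hp1' hp2').symm
      _ ≤ μ.real (Icc 0 (G (x i)) ×ˢ Icc 0 (G (w i))) :=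
          measureReal_mono (prod_mono (Icc_subset_Icc le_rfl hp1.2) (Icc_subset_Icc le_rfl hp2.2))
      _ = G a := by rw [hrect i hi i hi, hcurve i hi]
  refine le_of_eq_of_le ?_ (measureReal_mono hsub)
  rw [measureReal_biUnion_Icc_prod_Icc
    (fun i hi j hj hij => hG.antitoneOn (hmem j hj).1.1 (hmem i hi).1.1 (hx hi hj hij))
    (fun i hi j hj hij => hG.antitoneOn (hmem i hi).2.1 (hmem j hj).2.1 (hw hi hj hij)),
    hrect 0 (Nat.zero_le n) 0 (Nat.zero_le n), hcurve 0 (Nat.zero_le n)]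
  refine congrArg _ (Finset.sum_congr rfl fun i hi => ?_)
  have hi := Finset.mem_range.1 hi
  rw [hrect (i + 1) hi (i + 1) hi, hcurve (i + 1) hi, hrect i hi.le (i + 1) hi]

theorem measureReal_sublevel_le (hD2 : IsDistortion G D2) (hGa : 0 < G a) (hn : 0 < n)
    (hw0 : w 0 = 0) (hxn : x n = 0) :
    μ.real {p : ℝ × ℝ | p.1 ∈ Icc (0:ℝ) 1 ∧ p.2 ∈ Icc (0:ℝ) 1 ∧ C p.1 p.2 ≤ G a} ≤
      G a + ∑ i ∈ Finset.range n, (G (amoArg D1 D2 (x (i + 1)) (w i)) - G a) := by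
  have hsub := sublevel_subset_biUnion hG hGinv hCG hD1 hD2 ha hGa hx hmem hcurve hn hw0 hxn
  obtain ⟨m, rfl⟩ := Nat.exists_eq_add_one_of_ne_zero hn.ne'
  simp only [Nat.lt_add_one_iff] at hsub
  have hrect : ∀ i ≤ m + 1, ∀ j ≤ m + 1,
      μ.real (Icc 0 (G (x i)) ×ˢ Icc 0 (G (w j))) = G (amoArg D1 D2 (x i) (w j)) :=
    fun i hi j hj => measureReal_Icc_G_prod_Icc_G hG hGinv hD1 hC0 hCG hμ ha (hmem i hi).1
      (hmem j hj).2
  refine (measureReal_mono hsub (measure_ne_top μ _)).trans_eq ?_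
  rw [measureReal_biUnion_Icc_prod_Icc (U := fun i => G (x (i + 1))) (V := fun i => G (w i))
    (fun i hi j hj hij => hG.antitoneOn (hmem (j + 1) (Nat.succ_le_succ hj)).1.1
      (hmem (i + 1) (Nat.succ_le_succ hi)).1.1
      (hx (Nat.succ_le_succ hi) (Nat.succ_le_succ hj) (Nat.succ_le_succ hij)))
    (fun i hi j hj hij => hG.antitoneOn (hmem i (Nat.le_succ_of_le hi)).2.1
      (hmem j (Nat.le_succ_of_le hj)).2.1
      (hw (Nat.le_succ_of_le hi) (Nat.le_succ_of_le hj) hij)),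
    hrect 1 (by omega) 0 (by omega), Finset.sum_range_succ']
  have hsum : ∀ i ∈ Finset.range m,
      μ.real (Icc 0 (G (x (i + 1 + 1))) ×ˢ Icc 0 (G (w (i + 1)))) -
        μ.real (Icc 0 (G (x (i + 1))) ×ˢ Icc 0 (G (w (i + 1)))) =
      G (amoArg D1 D2 (x (i + 1 + 1)) (w (i + 1))) - G a := fun i hi => by
    have hi := Finset.mem_range.1 hi
    rw [hrect (i + 1 + 1) (by omega) (i + 1) (by omega),
      hrect (i + 1) (by omega) (i + 1) (by omega), hcurve (i + 1) (by omega)]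
  rw [Finset.sum_congr rfl hsum]
  ring

end StaircaseBounds

theorem measureReal_sublevel_mem_Icc (hD2 : IsDistortion G D2) (hGa : 0 < G a) {x₀ w₀ : ℝ}
    (hx₀ : x₀ ∈ Icc 0 a) (hw₀ : w₀ ∈ Icc 0 a) (h1 : D1 x₀ + w₀ = a) (h2 : x₀ + D2 w₀ = a)
    {k : ℕ} (hk : 0 < k) :
    μ.real {p : ℝ × ℝ | p.1 ∈ Icc (0:ℝ) 1 ∧ p.2 ∈ Icc (0:ℝ) 1 ∧ C p.1 p.2 ≤ G a} ∈
      Icc (G a + k * (G a - G (a + D2 w₀ / k)) + k * (G a - G (a + D1 x₀ / k)))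
        (G a + k * (G (a - D2 w₀ / k) - G a) + k * (G (a - D1 x₀ / k) - G a)) := by
  obtain ⟨x, w, hx, hw, hw0, hxk, hmem, hcurve, hlower, hupper⟩ :=
    exists_staircase hD1 hD2 ⟨hx₀.1.trans hx₀.2, ha.le⟩ hx₀ hw₀ h1 h2 hk
  have hin := le_measureReal_sublevel hG hGinv hD1 hC0 hCG hμ ha hx hw hmem hcurve
  have hout := measureReal_sublevel_le hG hGinv hD1 hC0 hCG hμ ha hx hw hmem hcurve hD2 hGa
    (by omega) hw0 hxk
  have e1 : ∀ i ∈ Finset.range k, G a - G (amoArg D1 D2 (x i) (w (i + 1))) =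
      G a - G (a + D2 w₀ / k) := fun i hi => by rw [(hlower i (Finset.mem_range.1 hi)).1]
  have e2 : ∀ j ∈ Finset.range k, G a - G (amoArg D1 D2 (x (k + j)) (w (k + j + 1))) =
      G a - G (a + D1 x₀ / k) := fun j hj => by rw [(hupper j (Finset.mem_range.1 hj)).1]
  have e3 : ∀ i ∈ Finset.range k, G (amoArg D1 D2 (x (i + 1)) (w i)) - G a =
      G (a - D2 w₀ / k) - G a := fun i hi => by rw [(hlower i (Finset.mem_range.1 hi)).2]
  have e4 : ∀ j ∈ Finset.range k, G (amoArg D1 D2 (x (k + j + 1)) (w (k + j))) - G a =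
      G (a - D1 x₀ / k) - G a := fun j hj => by rw [(hupper j (Finset.mem_range.1 hj)).2]
  rw [Finset.sum_range_add, Finset.sum_eq_card_nsmul e1, Finset.sum_eq_card_nsmul e2] at hin
  rw [Finset.sum_range_add, Finset.sum_eq_card_nsmul e3, Finset.sum_eq_card_nsmul e4] at hout
  simp only [Finset.card_range, nsmul_eq_mul] at hin hout
  exact ⟨by linarith, by linarith⟩

end Sublevel

theorem tendsto_nat_mul_sub_of_hasDerivAt {f : ℝ → ℝ} {f' a : ℝ} (hf : HasDerivAt f f' a)
    (c : ℝ) : Tendsto (fun k : ℕ => (k : ℝ) * (f (a + c / k) - f a)) atTop (𝓝 (c * f')) := by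
  rcases eq_or_ne c 0 with rfl | hc
  · simp
  have hlim : Tendsto (fun k : ℕ => c / k) atTop (𝓝[≠] 0) :=
    tendsto_nhdsWithin_iff.2 ⟨tendsto_const_div_atTop_nhds_zero_nat c,
      eventually_atTop.2 ⟨1, fun k hk => div_ne_zero hc (by positivity)⟩⟩
  refine ((hf.tendsto_slope_zero.comp hlim).const_mul c).congr'
    (eventually_atTop.2 ⟨1, fun k hk => ?_⟩)
  have : (k : ℝ) ≠ 0 := by positivity
  simp only [Function.comp, smul_eq_mul, inv_div]
  field_simp

/-- Both bounds are `f a - (c₁ + c₂) f'` plus `o(1)`. -/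
theorem HasDerivAt.eq_of_forall_mem_Icc {f : ℝ → ℝ} {f' a c₁ c₂ m : ℝ} (hf : HasDerivAt f f' a)
    (h : ∀ k : ℕ, 0 < k → m ∈ Icc (f a + k * (f a - f (a + c₁ / k)) + k * (f a - f (a + c₂ / k)))
      (f a + k * (f (a - c₁ / k) - f a) + k * (f (a - c₂ / k) - f a))) :
    m = f a - (c₁ + c₂) * f' := by
  have hlim := tendsto_nat_mul_sub_of_hasDerivAt hf
  have hlower : Tendsto (fun k : ℕ => f a + k * (f a - f (a + c₁ / k)) +
      k * (f a - f (a + c₂ / k))) atTop (𝓝 (f a - (c₁ + c₂) * f')) := by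
    convert ((hlim c₁).add (hlim c₂)).const_sub (f a) using 1
    · funext k
      ring
    · congr 1
      ring
  have hupper : Tendsto (fun k : ℕ => f a + k * (f (a - c₁ / k) - f a) +
      k * (f (a - c₂ / k) - f a)) atTop (𝓝 (f a - (c₁ + c₂) * f')) := by
    convert ((hlim (-c₁)).add (hlim (-c₂))).const_add (f a) using 1
    · funext k
      simp only [neg_div, ← sub_eq_add_neg]
      ring
    · congr 1
      ring
  exact le_antisymm (ge_of_tendsto hupper (eventually_atTop.2 ⟨1, fun k hk => (h k hk).2⟩))
    (le_of_tendsto hlower (eventually_atTop.2 ⟨1, fun k hk => (h k hk).1⟩))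

theorem invFunOn_T_corner {G D1 D2 T : ℝ → ℝ} {ST : Set ℝ}
    (hD1 : IsDistortion G D1) (hD2 : IsDistortion G D2)
    (hT : ∀ x : ℝ, T x = Function.invFunOn (fun w => w - D1 w) (distortionDomain G) x +
        Function.invFunOn (fun w => w - D2 w) (distortionDomain G) x - x)
    (hST : ST = ((fun w => w - D1 w) '' distortionDomain G) ∩
        ((fun w => w - D2 w) '' distortionDomain G))
    {x₀ w₀ : ℝ} (hx₀ : x₀ ∈ distortionDomain G) (hw₀ : w₀ ∈ distortionDomain G)
    (hcross : x₀ - D1 x₀ = w₀ - D2 w₀) :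
    Function.invFunOn T ST (D1 x₀ + w₀) = x₀ - D1 x₀ := by
  have hT_apply : ∀ y ∈ distortionDomain G, ∀ z ∈ distortionDomain G, y - D1 y = z - D2 z →
      T (y - D1 y) = D1 y + z := fun y hy z hz h => by
    rw [hT, hD1.invFunOn_hat hy, h, hD2.invFunOn_hat hz]
    linarith
  have hmono : StrictMonoOn T ST := by
    intro s hs s' hs' hss'
    rw [hST] at hs hs'
    obtain ⟨⟨y, hy, rfl⟩, ⟨z, hz, hzy⟩⟩ := hs
    obtain ⟨⟨y', hy', rfl⟩, ⟨z', hz', hzy'⟩⟩ := hs'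
    simp only at hzy hzy' hss'
    rw [hT_apply y hy z hz hzy.symm, hT_apply y' hy' z' hz' hzy'.symm]
    have hyy' : y < y' := (hD1.hatStrictMono.lt_iff_lt hy hy').1 hss'
    have hzz' : z < z' := (hD2.hatStrictMono.lt_iff_lt hz hz').1 (by linarith)
    linarith [hD1.strictMono hy hy' hyy']
  rw [← hT_apply x₀ hx₀ w₀ hw₀ hcross]
  exact hmono.injOn.leftInvOn_invFunOn (hST ▸ ⟨⟨x₀, hx₀, rfl⟩, ⟨w₀, hw₀, hcross.symm⟩⟩)

theorem AMO_kendall_function_general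
    (G Ginv D1 D2 f finv T Tinv : ℝ → ℝ) (ST : Set ℝ) (C : ℝ → ℝ → ℝ)
    (μ : Measure (ℝ × ℝ)) [IsProbabilityMeasure μ]
    (hG : IsGenerator G)
    (hGinv : IsGenInv G Ginv)
    (hD1 : IsDistortion G D1) (hD2 : IsDistortion G D2)
    (hcase : xG G ≠ ⊤ → D2 ((xG G).toReal) ≤ D1 ((xG G).toReal))
    (hf : ∀ x : ℝ, f x = Function.invFunOn (fun w => w - D2 w) (distortionDomain G) (x - D1 x))
    (hC : AMOSpec G Ginv D1 D2 f finv C)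
    (hT : ∀ x : ℝ, T x = Function.invFunOn (fun w => w - D1 w) (distortionDomain G) x +
        Function.invFunOn (fun w => w - D2 w) (distortionDomain G) x - x)
    (hST : ST = ((fun w => w - D1 w) '' distortionDomain G) ∩
        ((fun w => w - D2 w) '' distortionDomain G))
    (hTinv : ∀ y : ℝ, Tinv y = Function.invFunOn T ST y)
    (hμ : ∀ u ∈ Set.Icc (0:ℝ) 1, ∀ v ∈ Set.Icc (0:ℝ) 1,
      μ (Set.Icc 0 u ×ˢ Set.Icc 0 v) = ENNReal.ofReal (C u v)) :
    ∀ t ∈ Set.Ioo (0:ℝ) 1,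
      (μ {p : ℝ × ℝ | p.1 ∈ Set.Icc (0:ℝ) 1 ∧ p.2 ∈ Set.Icc (0:ℝ) 1 ∧ C p.1 p.2 ≤ t}).toReal =
        (t - deriv G (Ginv t) * Ginv t) + deriv G (Ginv t) * Tinv (Ginv t) := by
  intro t ht
  have ht' : t ∈ Ioc (0:ℝ) 1 := ⟨ht.1, ht.2.le⟩
  set a := Ginv t
  have hGa : G a = t := hGinv.right_inv t ht'
  have ha0 : 0 < a := (hGinv.nonneg t ht').lt_of_ne fun h => by
    have : G 0 = t := by rw [h]; exact hGa
    linarith [hG.one_at_zero, ht.2]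
  have haxG : ENNReal.ofReal a < xG G := hG.ofReal_lt_xG ha0 (hGa ▸ ht.1)
  have ha : a ∈ distortionDomain G := ⟨ha0.le, haxG.le⟩
  obtain ⟨x₀, w₀, hx₀, hw₀, h1, h2⟩ := exists_corner hD1 hD2 ha
  have hTa : Tinv a = x₀ - D1 x₀ := by
    rw [hTinv, ← h1]
    exact invFunOn_T_corner hD1 hD2 hT hST (Icc_subset_distortionDomain ha hx₀)
      (Icc_subset_distortionDomain ha hw₀) (by linarith)
  have hμS := (hG.diff a ha0).hasDerivAt.eq_of_forall_mem_Icc fun k hk =>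
    measureReal_sublevel_mem_Icc hG hGinv hD1 hC.1
      (fun u hu v hv => hC.eq_G_amoArg hG hGinv hD1 hD2 hcase hf hu hv) hμ haxG hD2
      (hGa ▸ ht.1) hx₀ hw₀ h1 h2 hk
  rw [← hGa, ← measureReal_def, hTa, hμS]
  linear_combination (-deriv G a) * h2

/-- Theorem 4.1: the Kendall function of the Archimedean-based
Marshall-Olkin copula: for `t ∈ (0,1)`,
`μ({(u,v) ∈ [0,1]² : C_AMO(u,v) ≤ t}) = K_G(t) + G′(G⁻¹(t))·T⁻¹(G⁻¹(t))`, where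
`K_G(t) = t − G′(G⁻¹(t))·G⁻¹(t)` and `T(x) = D̂₁⁻¹(x) + D̂₂⁻¹(x) − x`. -/
theorem AMO_kendall_function
    (G Ginv D1 D2 f finv T Tinv : ℝ → ℝ) (ST : Set ℝ) (C : ℝ → ℝ → ℝ)
    (μ : Measure (ℝ × ℝ)) [IsProbabilityMeasure μ]
    (hG : IsGenerator G)
    (hG' : ∀ x : ℝ, 0 < x → ENNReal.ofReal x < xG G → deriv G x < 0)
    (hGinv : IsGenInv G Ginv)
    (hD1 : IsDistortion G D1) (hD2 : IsDistortion G D2)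
    (hcase : xG G ≠ ⊤ → D2 ((xG G).toReal) ≤ D1 ((xG G).toReal))
    (hf : ∀ x : ℝ, f x = Function.invFunOn (fun w => w - D2 w) (distortionDomain G) (x - D1 x))
    (hfinv : ∀ x : ℝ, finv x =
      Function.invFunOn (fun w => w - D1 w) (distortionDomain G) (x - D2 x))
    (hC : AMOSpec G Ginv D1 D2 f finv C)
    (hT : ∀ x : ℝ, T x = Function.invFunOn (fun w => w - D1 w) (distortionDomain G) x +
        Function.invFunOn (fun w => w - D2 w) (distortionDomain G) x - x)
    (hST : ST = ((fun w => w - D1 w) '' distortionDomain G) ∩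
        ((fun w => w - D2 w) '' distortionDomain G))
    (hTinv : ∀ y : ℝ, Tinv y = Function.invFunOn T ST y)
    (hμ : ∀ u ∈ Set.Icc (0:ℝ) 1, ∀ v ∈ Set.Icc (0:ℝ) 1,
      μ (Set.Icc 0 u ×ˢ Set.Icc 0 v) = ENNReal.ofReal (C u v)) :
    ∀ t ∈ Set.Ioo (0:ℝ) 1,
      (μ {p : ℝ × ℝ | p.1 ∈ Set.Icc (0:ℝ) 1 ∧ p.2 ∈ Set.Icc (0:ℝ) 1 ∧ C p.1 p.2 ≤ t}).toReal =
        (t - deriv G (Ginv t) * Ginv t) + deriv G (Ginv t) * Tinv (Ginv t) :=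
  AMO_kendall_function_general G Ginv D1 D2 f finv T Tinv ST C μ hG hGinv hD1 hD2 hcase hf hC hT hST
    hTinv hμ
end

section
/- Let θ > 0, G(x) = (x+1)^{−1/θ} (the Clayton generator), and c > 0, and set K_AMO(t) = K_G(t) + (c/(c+1))·G′(G^{-1}(t))·G^{-1}(t), where K_G(t) = t − G′(G^{-1}(t))·G^{-1}(t). Then the Kendall's tau τ_AMO = 3 − 4∫₀¹ K_AMO(t) dt equals θ/(θ+2) + (c/(c+1))·(2/(2+θ)); equivalently, 4∫₀^∞ (G′(x))²·(c/(c+1))·x dx = (c/(c+1))·(2/(2+θ)). -/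
open MeasureTheory Filter Set Topology
open scoped ENNReal

/-!
On `(0, 1]` the substitution `x = G⁻¹(t) = t^(-θ) - 1` turns `G'(G⁻¹ t)` into `-(1/θ) t^(1+θ)`, so
`K_AMO(t) = t - (t^(1+θ) - t) / ((c+1) θ)` is a combination of powers of `t` and its integral is
elementary. The second integrand is `(c/(c+1)) θ⁻² x (x+1)^q` with `q = -2/θ - 2 < -2`, which has
the antiderivative `(x+1)^(q+2)/(q+2) - (x+1)^(q+1)/(q+1)` vanishing at infinity.
-/

noncomputable def claytonGen (θ x : ℝ) : ℝ := (x + 1) ^ (-(1 / θ))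

theorem hasDerivAt_add_one_rpow (p : ℝ) {x : ℝ} (hx : -1 < x) :
    HasDerivAt (fun y : ℝ => (y + 1) ^ p) (p * (x + 1) ^ (p - 1)) x := by
  have hpow := Real.hasDerivAt_rpow_const (p := p) (Or.inl (by linarith : x + 1 ≠ 0))
  simpa [Function.comp_def] using hpow.comp x ((hasDerivAt_id x).add_const 1)

theorem deriv_claytonGen (θ : ℝ) {x : ℝ} (hx : -1 < x) :
    deriv (claytonGen θ) x = -(1 / θ) * (x + 1) ^ (-(1 / θ) - 1) :=
  (hasDerivAt_add_one_rpow _ hx).deriv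

theorem deriv_claytonGen_inv_mul {θ t : ℝ} (hθ : θ ≠ 0) (ht : 0 < t) :
    deriv (claytonGen θ) (t ^ (-θ) - 1) * (t ^ (-θ) - 1) = (t ^ (1 + θ) - t) / θ := by
  have hinv_pos : 0 < t ^ (-θ) := Real.rpow_pos_of_pos ht _
  have hderiv : deriv (claytonGen θ) (t ^ (-θ) - 1) = -(1 / θ) * t ^ (1 + θ) := by
    rw [deriv_claytonGen θ (by linarith), sub_add_cancel, ← Real.rpow_mul ht.le]
    congr 2
    field_simp
    ring
  have hcancel : t ^ (1 + θ) * t ^ (-θ) = t := by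
    rw [← Real.rpow_add ht, add_neg_cancel_right, Real.rpow_one]
  rw [hderiv]
  linear_combination (-(1 / θ)) * hcancel

theorem deriv_claytonGen_sq {θ x : ℝ} (hθ : θ ≠ 0) (hx : -1 < x) :
    deriv (claytonGen θ) x ^ 2 = (x + 1) ^ (-(2 / θ) - 2) / θ ^ 2 := by
  have hx1 : 0 < x + 1 := by linarith
  rw [deriv_claytonGen θ hx, mul_pow, ← Real.rpow_natCast ((x + 1) ^ _) 2,
    ← Real.rpow_mul hx1.le, Nat.cast_ofNat, show (-(1 / θ) - 1) * 2 = -(2 / θ) - 2 by ring]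
  field_simp

theorem integral_Ioc_zero_one_mul_sub_mul_rpow (a b : ℝ) {r : ℝ} (hr : -1 < r) :
    ∫ t in Ioc (0 : ℝ) 1, (a * t - b * t ^ r) = a / 2 - b / (r + 1) := by
  rw [← intervalIntegral.integral_of_le zero_le_one, intervalIntegral.integral_sub
      (intervalIntegral.intervalIntegrable_id.const_mul a)
      ((intervalIntegral.intervalIntegrable_rpow' hr).const_mul b),
    intervalIntegral.integral_const_mul, intervalIntegral.integral_const_mul, integral_id,
    integral_rpow (Or.inl hr), Real.one_rpow, Real.zero_rpow (by linarith)]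
  ring

theorem integral_Ioi_mul_add_one_rpow {q : ℝ} (hq : q < -2) :
    ∫ x in Ioi (0 : ℝ), x * (x + 1) ^ q = 1 / ((q + 1) * (q + 2)) := by
  have hq1 : q + 1 ≠ 0 := by linarith
  have hq2 : q + 2 ≠ 0 := by linarith
  set F : ℝ → ℝ := fun x => (x + 1) ^ (q + 2) / (q + 2) - (x + 1) ^ (q + 1) / (q + 1)
  have hF : ∀ x ∈ Ici (0 : ℝ), HasDerivAt F (x * (x + 1) ^ q) x := by
    intro x (hx : 0 ≤ x)
    have hderiv := ((hasDerivAt_add_one_rpow (q + 2) (by linarith : -1 < x)).div_const (q + 2)).sub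
      ((hasDerivAt_add_one_rpow (q + 1) (by linarith : -1 < x)).div_const (q + 1))
    refine hderiv.congr_deriv ?_
    rw [show q + 2 - 1 = q + 1 by ring, add_sub_cancel_right,
      Real.rpow_add (by linarith : (0 : ℝ) < x + 1), Real.rpow_one]
    field_simp
    ring
  have hF_nonneg : ∀ x ∈ Ioi (0 : ℝ), 0 ≤ x * (x + 1) ^ q := fun x (hx : 0 < x) => by positivity
  have hF_tendsto : Tendsto F atTop (𝓝 0) := by
    have hshift : Tendsto (fun x : ℝ => x + 1) atTop atTop :=
      tendsto_atTop_add_const_right _ 1 tendsto_id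
    have hpow : ∀ s : ℝ, s < 0 → Tendsto (fun x : ℝ => (x + 1) ^ s) atTop (𝓝 0) := fun s hs => by
      have hneg := (tendsto_rpow_neg_atTop (y := -s) (by linarith)).comp hshift
      simpa [Function.comp_def] using hneg
    simpa using ((hpow _ (by linarith)).div_const (q + 2)).sub
      ((hpow _ (by linarith)).div_const (q + 1))
  rw [integral_Ioi_of_hasDerivAt_of_nonneg' hF hF_nonneg hF_tendsto]
  simp only [F, zero_add, Real.one_rpow]
  field_simp
  ring

/-- for the Clayton generator `G(x) = (x+1)^(−1/θ)`, `θ > 0`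
(so `G⁻¹(t) = t^(−θ) − 1` and `τ_G = θ/(θ+2)`), and a proportionality constant `c > 0`
(corresponding to `H₃ = c(H₁+H₂)`, i.e. `T⁻¹(x) = (c/(c+1)) x`), the Kendall tau of the
Archimedean-based Marshall-Olkin copula, whose Kendall function is
`K_AMO(t) = K_G(t) + (c/(c+1)) G′(G⁻¹(t)) G⁻¹(t)`, equals
`τ_AMO = θ/(θ+2) + (c/(c+1))·(2/(2+θ))`; equivalently
`4∫₀^∞ (G′(x))² (c/(c+1)) x dx = (c/(c+1))·(2/(2+θ))`. -/
theorem AMO_kendall_tau_clayton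
    (θ c : ℝ) (hθ : 0 < θ) (hc : 0 < c)
    (G Ginv KG KAMO : ℝ → ℝ)
    (hG : ∀ x : ℝ, G x = (x + 1) ^ (-(1 / θ)))
    (hGinv : ∀ t : ℝ, Ginv t = t ^ (-θ) - 1)
    (hKG : ∀ t : ℝ, KG t = t - deriv G (Ginv t) * Ginv t)
    (hKAMO : ∀ t : ℝ, KAMO t = KG t + (c / (c + 1)) * (deriv G (Ginv t) * Ginv t)) :
    3 - 4 * (∫ t in Set.Ioc (0:ℝ) 1, KAMO t) = θ / (θ + 2) + (c / (c + 1)) * (2 / (2 + θ)) ∧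
    4 * (∫ x in Set.Ioi (0:ℝ), (deriv G x) ^ 2 * ((c / (c + 1)) * x)) =
      (c / (c + 1)) * (2 / (2 + θ)) := by
  have hG_eq : G = claytonGen θ := funext hG
  subst hG_eq
  have hK : ∀ t ∈ Ioc (0 : ℝ) 1, KAMO t =
      (1 + 1 / ((c + 1) * θ)) * t - 1 / ((c + 1) * θ) * t ^ (1 + θ) := fun t ht => by
    rw [hKAMO, hKG, hGinv, deriv_claytonGen_inv_mul hθ.ne' ht.1]
    field_simp
    ring
  have hintegrand : ∀ x ∈ Ioi (0 : ℝ), deriv (claytonGen θ) x ^ 2 * ((c / (c + 1)) * x) =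
      c / (c + 1) / θ ^ 2 * (x * (x + 1) ^ (-(2 / θ) - 2)) := fun x (hx : 0 < x) => by
    rw [deriv_claytonGen_sq hθ.ne' (by linarith)]
    ring
  have hq : -(2 / θ) - 2 < -2 := by linarith [div_pos two_pos hθ]
  rw [setIntegral_congr_fun measurableSet_Ioc hK, integral_Ioc_zero_one_mul_sub_mul_rpow _ _
      (by linarith), setIntegral_congr_fun measurableSet_Ioi hintegrand, integral_const_mul,
    integral_Ioi_mul_add_one_rpow hq]
  have hq_add_two : -(2 / θ) - 2 + 2 = -(2 / θ) := by ring
  have hq_add_one : -(2 / θ) - 2 + 1 = -((2 + θ) / θ) := by field_simp; ring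
  rw [hq_add_one, hq_add_two]
  constructor <;> field_simp <;> ring
end

section
/- Let G:[0,∞)→(0,1] and suppose there exist c, γ > 0 such that G(x)·x^γ → c as x → +∞. Let D:(0,∞)→[0,∞) satisfy D(x)/x → β as x → +∞ for some β ∈ [0,1]. Then G(x + D(x))/G(x) → (1+β)^{−γ} as x → +∞. In particular, for the Clayton generator G(x) = (x+1)^{−1/θ}, θ > 0, the lower tail dependence parameter of the Archimedean-based Marshall-Olkin copula with distortion satisfying D(x)/x → β is λ_L = (1+β)^{−1/θ}. -/
/-!
If `G x * x ^ γ → c ≠ 0` and `f x / x → L > 0`, then `f x → ∞` as well, so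
`G (f x) / G x` is, up to the factor `(f x / x) ^ γ → L ^ γ`, the quotient of two
expressions both tending to `c`; hence it tends to `L ^ (-γ)`. The Clayton generator
`(x + 1) ^ (-1/θ)` decays like `x ^ (-1/θ)` with constant `1`.
-/

open Filter Topology

theorem tendsto_atTop_of_tendsto_div_id {f : ℝ → ℝ} {L : ℝ} (hL : 0 < L)
    (hf : Tendsto (fun x => f x / x) atTop (𝓝 L)) : Tendsto f atTop atTop := by
  refine (tendsto_id.atTop_mul_pos hL hf).congr' ?_
  filter_upwards [eventually_ne_atTop 0] with x hx
  exact mul_div_cancel₀ (f x) hx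

theorem tendsto_div_comp_of_tendsto_mul_rpow {G f : ℝ → ℝ} {c γ L : ℝ} (hc : c ≠ 0)
    (hG : Tendsto (fun x => G x * x ^ γ) atTop (𝓝 c)) (hL : 0 < L)
    (hf : Tendsto (fun x => f x / x) atTop (𝓝 L)) :
    Tendsto (fun x => G (f x) / G x) atTop (𝓝 (L ^ (-γ))) := by
  have hf_top := tendsto_atTop_of_tendsto_div_id hL hf
  have hquot : Tendsto (fun x => G (f x) * f x ^ γ / (G x * x ^ γ) / (f x / x) ^ γ) atTop
      (𝓝 (c / c / L ^ γ)) :=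
    ((hG.comp hf_top).div hG hc).div (hf.rpow_const (Or.inl hL.ne'))
      (Real.rpow_pos_of_pos hL γ).ne'
  rw [div_self hc, one_div, ← Real.rpow_neg hL.le] at hquot
  refine hquot.congr' ?_
  filter_upwards [eventually_gt_atTop 0, hf_top.eventually_gt_atTop 0] with x hx hfx
  have hxγ : x ^ γ ≠ 0 := (Real.rpow_pos_of_pos hx γ).ne'
  have hfxγ : f x ^ γ ≠ 0 := (Real.rpow_pos_of_pos hfx γ).ne'
  rw [Real.div_rpow hfx.le hx.le, mul_div_mul_comm]
  field_simp

theorem tendsto_add_one_rpow_neg_mul_rpow (p : ℝ) :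
    Tendsto (fun x : ℝ => (x + 1) ^ (-p) * x ^ p) atTop (𝓝 1) := by
  have hbase : Tendsto (fun x : ℝ => 1 + x⁻¹) atTop (𝓝 1) := by
    simpa using tendsto_inv_atTop_zero.const_add (1 : ℝ)
  have hpow := hbase.rpow_const (p := -p) (Or.inl one_ne_zero)
  rw [Real.one_rpow] at hpow
  refine hpow.congr' ?_
  filter_upwards [eventually_gt_atTop 0] with x hx
  have hbase_eq : 1 + x⁻¹ = (x + 1) / x := by field_simp
  rw [hbase_eq, Real.div_rpow (by linarith) hx.le, Real.rpow_neg hx.le, div_inv_eq_mul]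

theorem AMO_lower_tail_polynomial_decay_general
    (G D : ℝ → ℝ) (c γ β : ℝ) (hc : 0 < c)
    (hGdecay : Tendsto (fun x : ℝ => G x * x ^ γ) atTop (𝓝 c))
    (hβ : β ∈ Set.Icc (0:ℝ) 1)
    (hD : Tendsto (fun x : ℝ => D x / x) atTop (𝓝 β)) :
    Tendsto (fun x : ℝ => G (x + D x) / G x) atTop (𝓝 ((1 + β) ^ (-γ))) ∧
    ∀ θ : ℝ, 0 < θ →
      Tendsto (fun x : ℝ => (x + D x + 1) ^ (-(1 / θ)) / (x + 1) ^ (-(1 / θ))) atTop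
        (𝓝 ((1 + β) ^ (-(1 / θ)))) := by
  have hβ_pos : 0 < 1 + β := by linarith [hβ.1]
  have hratio : Tendsto (fun x => (x + D x) / x) atTop (𝓝 (1 + β)) := by
    refine (hD.const_add 1).congr' ?_
    filter_upwards [eventually_ne_atTop 0] with x hx
    rw [add_div, div_self hx]
  refine ⟨tendsto_div_comp_of_tendsto_mul_rpow hc.ne' hGdecay hβ_pos hratio, fun θ _ => ?_⟩
  exact tendsto_div_comp_of_tendsto_mul_rpow one_ne_zero
    (tendsto_add_one_rpow_neg_mul_rpow (1 / θ)) hβ_pos hratio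

/-- if `G : [0,∞) → (0,1]` has polynomial decay `G(x) ~ c x^(−γ)` at `+∞`
and the distortion satisfies `D(x)/x → β ∈ [0,1]`, then the lower tail limit is
`G(x + D(x))/G(x) → (1+β)^(−γ)`; in particular for the Clayton generator
`G(x) = (x+1)^(−1/θ)` the lower tail dependence parameter is `λ_L = (1+β)^(−1/θ)`. -/
theorem AMO_lower_tail_polynomial_decay
    (G D : ℝ → ℝ) (c γ β : ℝ) (hc : 0 < c) (hγ : 0 < γ)
    (hGmem : ∀ x : ℝ, 0 ≤ x → G x ∈ Set.Ioc (0:ℝ) 1)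
    (hGdecay : Tendsto (fun x : ℝ => G x * x ^ γ) atTop (𝓝 c))
    (hDnonneg : ∀ x : ℝ, 0 < x → 0 ≤ D x)
    (hβ : β ∈ Set.Icc (0:ℝ) 1)
    (hD : Tendsto (fun x : ℝ => D x / x) atTop (𝓝 β)) :
    Tendsto (fun x : ℝ => G (x + D x) / G x) atTop (𝓝 ((1 + β) ^ (-γ))) ∧
    ∀ θ : ℝ, 0 < θ →
      Tendsto (fun x : ℝ => (x + D x + 1) ^ (-(1 / θ)) / (x + 1) ^ (-(1 / θ))) atTop
        (𝓝 ((1 + β) ^ (-(1 / θ)))) :=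
  AMO_lower_tail_polynomial_decay_general G D c γ β hc hGdecay hβ hD
end

section
/- Let G:[0,∞)→(0,1] and suppose there exist a, c > 0 and γ ∈ (0,1) such that G(x)·e^{a·x^γ} → c as x → +∞. Let D:(0,∞)→[0,∞) satisfy D(x)/x → 0 and D(x)/x^{1−γ} → L as x → +∞ for some L ∈ [0,∞). Then G(x + D(x))/G(x) → e^{−aγL} as x → +∞. -/
open Filter Topology

/-! Writing `t = D(x)/x`, the exponent difference is
`x^γ((1 + t)^γ - 1) = (D(x)/x^(1-γ)) · dslope (·^γ) 1 (1 + t)`, and the difference quotient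
tends to the derivative `γ` of `s ↦ s^γ` at `1`, so `a(x + D(x))^γ - a x^γ → aγL`.
The ratio `G(x + D(x))/G(x)` is the ratio of the normalised values `G(y) e^{a y^γ}`, both tending
to `c ≠ 0`, times `e^{-(a(x + D(x))^γ - a x^γ)}`. -/

lemma tendsto_div_of_tendsto_mul_exp {G φ y : ℝ → ℝ} {c ℓ : ℝ} (hc : c ≠ 0)
    (hG : Tendsto (fun x => G x * Real.exp (φ x)) atTop (𝓝 c))
    (hy : Tendsto y atTop atTop)
    (hφ : Tendsto (fun x => φ (y x) - φ x) atTop (𝓝 ℓ)) :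
    Tendsto (fun x => G (y x) / G x) atTop (𝓝 (Real.exp (-ℓ))) := by
  have hratio := (hG.comp hy).div hG hc
  rw [div_self hc] at hratio
  have hexp := (Real.continuous_exp.tendsto _).comp hφ.neg
  refine (one_mul (Real.exp (-ℓ)) ▸ hratio.mul hexp).congr fun x => ?_
  simp only [Pi.div_apply, Function.comp_apply, Real.exp_neg, Real.exp_sub]
  field_simp [Real.exp_ne_zero]

lemma tendsto_add_atTop_of_div_tendsto_zero {D : ℝ → ℝ}
    (hD0 : Tendsto (fun x => D x / x) atTop (𝓝 0)) :
    Tendsto (fun x => x + D x) atTop atTop := by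
  refine tendsto_atTop_mono' atTop ?_ (tendsto_id.atTop_mul_const (by norm_num : (0:ℝ) < 1 / 2))
  filter_upwards [eventually_gt_atTop 0,
    hD0.eventually (eventually_gt_nhds (by norm_num : (-1/2 : ℝ) < 0))] with x hx hDx
  rw [lt_div_iff₀ hx] at hDx
  simp only [id_eq]
  linarith

lemma rpow_add_sub_rpow_eq_mul_dslope {x d : ℝ} (γ : ℝ) (hx : 0 < x) (hd : 0 ≤ 1 + d / x) :
    (x + d) ^ γ - x ^ γ = d / x ^ (1 - γ) * dslope (fun s : ℝ => s ^ γ) 1 (1 + d / x) := by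
  have hslope := sub_smul_dslope (fun s : ℝ => s ^ γ) 1 (1 + d / x)
  simp only [add_sub_cancel_left, smul_eq_mul, Real.one_rpow] at hslope
  have hxd : x + d = x * (1 + d / x) := by field_simp
  rw [hxd, Real.mul_rpow hx.le hd, Real.rpow_sub hx, Real.rpow_one, div_div_eq_mul_div,
    mul_div_right_comm]
  linear_combination (-x ^ γ) * hslope

lemma tendsto_rpow_add_sub_rpow {D : ℝ → ℝ} {γ L : ℝ}
    (hD0 : Tendsto (fun x => D x / x) atTop (𝓝 0))
    (hDL : Tendsto (fun x => D x / x ^ (1 - γ)) atTop (𝓝 L)) :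
    Tendsto (fun x => (x + D x) ^ γ - x ^ γ) atTop (𝓝 (γ * L)) := by
  have hderiv : dslope (fun s : ℝ => s ^ γ) 1 1 = γ := by
    rw [dslope_same, Real.deriv_rpow_const, Real.one_rpow, mul_one]
  have hcont : ContinuousAt (dslope (fun s : ℝ => s ^ γ) 1) 1 :=
    continuousAt_dslope_same.2 (Real.differentiableAt_rpow_const_of_ne γ one_ne_zero)
  have hslope :
      Tendsto (fun x => dslope (fun s : ℝ => s ^ γ) 1 (1 + D x / x)) atTop (𝓝 γ) := by
    have h1 : Tendsto (fun x => 1 + D x / x) atTop (𝓝 1) := by simpa using hD0.const_add 1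
    have h2 := hcont.tendsto.comp h1
    rwa [hderiv] at h2
  refine (mul_comm L γ ▸ hDL.mul hslope).congr' ?_
  filter_upwards [eventually_gt_atTop 0,
    hD0.eventually (eventually_gt_nhds (by norm_num : (-1 : ℝ) < 0))] with x hx hDx
  exact (rpow_add_sub_rpow_eq_mul_dslope γ hx (by linarith)).symm

theorem AMO_lower_tail_exponential_decay_general
    (G D : ℝ → ℝ) (a c γ L : ℝ) (hc : 0 < c)
    (hGdecay : Tendsto (fun x : ℝ => G x * Real.exp (a * x ^ γ)) atTop (𝓝 c))
    (hD0 : Tendsto (fun x : ℝ => D x / x) atTop (𝓝 0))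
    (hDL : Tendsto (fun x : ℝ => D x / x ^ (1 - γ)) atTop (𝓝 L)) :
    Tendsto (fun x : ℝ => G (x + D x) / G x) atTop (𝓝 (Real.exp (-(a * γ * L)))) := by
  have hexponent :
      Tendsto (fun x => a * (x + D x) ^ γ - a * x ^ γ) atTop (𝓝 (a * γ * L)) := by
    simpa only [mul_sub, mul_assoc] using (tendsto_rpow_add_sub_rpow hD0 hDL).const_mul a
  exact tendsto_div_of_tendsto_mul_exp hc.ne' hGdecay
    (tendsto_add_atTop_of_div_tendsto_zero hD0) hexponent

/-- if `G : [0,∞) → (0,1]` has exponential decay `G(x) ~ c e^(−a x^γ)` at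
`+∞` with `0 < γ < 1`, and the distortion satisfies `D(x)/x → 0` and
`D(x)/x^(1−γ) → L ∈ [0,∞)`, then `G(x + D(x))/G(x) → e^(−aγL)`. -/
theorem AMO_lower_tail_exponential_decay
    (G D : ℝ → ℝ) (a c γ L : ℝ) (ha : 0 < a) (hc : 0 < c)
    (hγ : γ ∈ Set.Ioo (0:ℝ) 1)
    (hGmem : ∀ x : ℝ, 0 ≤ x → G x ∈ Set.Ioc (0:ℝ) 1)
    (hGdecay : Tendsto (fun x : ℝ => G x * Real.exp (a * x ^ γ)) atTop (𝓝 c))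
    (hDnonneg : ∀ x : ℝ, 0 < x → 0 ≤ D x)
    (hD0 : Tendsto (fun x : ℝ => D x / x) atTop (𝓝 0))
    (hL : 0 ≤ L)
    (hDL : Tendsto (fun x : ℝ => D x / x ^ (1 - γ)) atTop (𝓝 L)) :
    Tendsto (fun x : ℝ => G (x + D x) / G x) atTop (𝓝 (Real.exp (-(a * γ * L)))) :=
  AMO_lower_tail_exponential_decay_general G D a c γ L hc hGdecay hD0 hDL
end

section
/- Let G:[0,∞)→[0,1] with G(0)=1 and G(x) < 1 for x > 0, and suppose there exist c, γ > 0 such that (1 − G(x))/x^γ → c as x → 0⁺. Let D:(0,∞)→[0,∞) satisfy D(x)/x → β as x → 0⁺ for some β ∈ [0,1]. Then (1 − G(x + D(x)))/(1 − G(x)) → (1+β)^γ as x → 0⁺. In particular, the upper tail dependence parameter of the corresponding Archimedean-based Marshall-Olkin copula is λ_U = 2 − (1+β)^γ; e.g., for the Gumbel generator G(x) = e^{−x^{1/θ}}, θ ≥ 1, λ_U = 2 − (1+β)^{1/θ}. -/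
/-!
If `1 - G x ~ c x ^ γ` at `0⁺` with `c ≠ 0`, then for `y = x + D x` with `y / x → 1 + β`,
the ratio `(1 - G y) / (1 - G x)` factors as
`((1 - G y) / y ^ γ) * (y / x) ^ γ * (x ^ γ / (1 - G x)) → c * (1 + β) ^ γ * c⁻¹`.
The Gumbel generator satisfies the hypothesis with `c = 1`, `γ = 1 / θ`, since `1 - exp (-t) ~ t`.
-/

open Filter Topology

theorem tendsto_comp_div_of_tendsto_div_rpow {f y : ℝ → ℝ} {a c γ : ℝ} (hc : c ≠ 0) (ha : 0 < a)
    (hf : Tendsto (fun x => f x / x ^ γ) (𝓝[>] 0) (𝓝 c))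
    (hy : Tendsto y (𝓝[>] 0) (𝓝[>] 0)) (hya : Tendsto (fun x => y x / x) (𝓝[>] 0) (𝓝 a)) :
    Tendsto (fun x => f (y x) / f x) (𝓝[>] 0) (𝓝 (a ^ γ)) := by
  have hlim := (hf.comp hy).mul ((hya.rpow_const (p := γ) (Or.inl ha.ne')).mul (hf.inv₀ hc))
  rw [mul_left_comm, mul_inv_cancel₀ hc, mul_one] at hlim
  refine hlim.congr' ?_
  filter_upwards [self_mem_nhdsWithin, hy self_mem_nhdsWithin,
    hf.eventually_ne hc] with x (hx : 0 < x) (hyx : 0 < y x) hquot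
  have hxγ : x ^ γ ≠ 0 := (Real.rpow_pos_of_pos hx γ).ne'
  have hyγ : y x ^ γ ≠ 0 := (Real.rpow_pos_of_pos hyx γ).ne'
  have hfx : f x ≠ 0 := fun h => by simp [h] at hquot
  simp only [Function.comp_apply, Real.div_rpow hyx.le hx.le]
  field_simp

theorem tendsto_add_nhdsGT_zero_of_div {D : ℝ → ℝ} {β : ℝ} (hD0 : ∀ x, 0 < x → 0 ≤ D x)
    (hD : Tendsto (fun x => D x / x) (𝓝[>] 0) (𝓝 β)) :
    Tendsto (fun x => x + D x) (𝓝[>] 0) (𝓝[>] 0) := by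
  have hid : Tendsto id (𝓝[>] (0:ℝ)) (𝓝 0) := nhdsWithin_le_nhds
  have hDlim : Tendsto D (𝓝[>] 0) (𝓝 0) := by
    refine (mul_zero β ▸ hD.mul hid).congr' ?_
    filter_upwards [self_mem_nhdsWithin] with x (hx : 0 < x)
    exact div_mul_cancel₀ (D x) hx.ne'
  refine tendsto_nhdsWithin_iff.mpr ⟨by simpa using hid.add hDlim, ?_⟩
  filter_upwards [self_mem_nhdsWithin] with x (hx : 0 < x)
  exact add_pos_of_pos_of_nonneg hx (hD0 x hx)

theorem tendsto_add_div_self {D : ℝ → ℝ} {β : ℝ}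
    (hD : Tendsto (fun x => D x / x) (𝓝[>] 0) (𝓝 β)) :
    Tendsto (fun x => (x + D x) / x) (𝓝[>] 0) (𝓝 (1 + β)) := by
  refine (tendsto_const_nhds.add hD).congr' ?_
  filter_upwards [self_mem_nhdsWithin] with x (hx : 0 < x)
  rw [add_div, div_self hx.ne']

theorem tendsto_one_sub_exp_neg_div : Tendsto (fun t => (1 - Real.exp (-t)) / t) (𝓝[>] 0) (𝓝 1) := by
  have h : HasDerivAt (fun t => 1 - Real.exp (-t)) 1 0 := by
    simpa using ((Real.hasDerivAt_exp (-0)).comp 0 (hasDerivAt_neg 0)).const_sub 1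
  refine ((hasDerivAt_iff_tendsto_slope_zero.mp h).mono_left (nhdsGT_le_nhdsNE 0)).congr fun t => ?_
  simp [div_eq_inv_mul]

theorem tendsto_one_sub_exp_neg_rpow_div_rpow {p : ℝ} (hp : 0 < p) :
    Tendsto (fun x => (1 - Real.exp (-(x ^ p))) / x ^ p) (𝓝[>] 0) (𝓝 1) := by
  refine tendsto_one_sub_exp_neg_div.comp (tendsto_nhdsWithin_iff.mpr ⟨?_, ?_⟩)
  · simpa [Real.zero_rpow hp.ne'] using
      (tendsto_id.mono_left nhdsWithin_le_nhds).rpow_const (Or.inr hp.le) (x := (0:ℝ))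
  · filter_upwards [self_mem_nhdsWithin] with x (hx : 0 < x)
    exact Real.rpow_pos_of_pos hx p

theorem AMO_upper_tail_general
    (G D : ℝ → ℝ) (c γ β : ℝ) (hc : 0 < c)
    (hGdecay : Tendsto (fun x : ℝ => (1 - G x) / x ^ γ) (𝓝[>] (0:ℝ)) (𝓝 c))
    (hDnonneg : ∀ x : ℝ, 0 < x → 0 ≤ D x)
    (hβ : β ∈ Set.Icc (0:ℝ) 1)
    (hD : Tendsto (fun x : ℝ => D x / x) (𝓝[>] (0:ℝ)) (𝓝 β)) :
    Tendsto (fun x : ℝ => (1 - G (x + D x)) / (1 - G x)) (𝓝[>] (0:ℝ)) (𝓝 ((1 + β) ^ γ)) ∧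
    ∀ θ : ℝ, 1 ≤ θ →
      Tendsto (fun x : ℝ =>
          (1 - Real.exp (-((x + D x) ^ (1 / θ)))) / (1 - Real.exp (-(x ^ (1 / θ)))))
        (𝓝[>] (0:ℝ)) (𝓝 ((1 + β) ^ (1 / θ))) := by
  have hy := tendsto_add_nhdsGT_zero_of_div hDnonneg hD
  have hβ1 : 0 < 1 + β := by linarith [hβ.1]
  refine ⟨tendsto_comp_div_of_tendsto_div_rpow hc.ne' hβ1 hGdecay hy (tendsto_add_div_self hD),
    fun θ hθ => ?_⟩
  have hθ0 : 0 < 1 / θ := one_div_pos.mpr (by linarith)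
  exact tendsto_comp_div_of_tendsto_div_rpow one_ne_zero hβ1
    (tendsto_one_sub_exp_neg_rpow_div_rpow hθ0) hy (tendsto_add_div_self hD)

/-- if `G : [0,∞) → [0,1]` with `G(0) = 1`, `G(x) < 1` for `x > 0`, and
`(1 − G(x))/x^γ → c > 0` as `x → 0⁺`, and the distortion satisfies `D(x)/x → β ∈ [0,1]`
as `x → 0⁺`, then `(1 − G(x + D(x)))/(1 − G(x)) → (1+β)^γ` as `x → 0⁺`, so that the upper
tail dependence parameter of the corresponding Archimedean-based Marshall-Olkin copula is
`λ_U = 2 − (1+β)^γ`; in particular for the Gumbel generator `G(x) = e^(−x^(1/θ))`,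
`θ ≥ 1`, the limit is `(1+β)^(1/θ)`, i.e. `λ_U = 2 − (1+β)^(1/θ)`. -/
theorem AMO_upper_tail
    (G D : ℝ → ℝ) (c γ β : ℝ) (hc : 0 < c) (hγ : 0 < γ)
    (hG0 : G 0 = 1) (hGlt : ∀ x : ℝ, 0 < x → G x < 1)
    (hGmem : ∀ x : ℝ, 0 ≤ x → G x ∈ Set.Icc (0:ℝ) 1)
    (hGdecay : Tendsto (fun x : ℝ => (1 - G x) / x ^ γ) (𝓝[>] (0:ℝ)) (𝓝 c))
    (hDnonneg : ∀ x : ℝ, 0 < x → 0 ≤ D x)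
    (hβ : β ∈ Set.Icc (0:ℝ) 1)
    (hD : Tendsto (fun x : ℝ => D x / x) (𝓝[>] (0:ℝ)) (𝓝 β)) :
    Tendsto (fun x : ℝ => (1 - G (x + D x)) / (1 - G x)) (𝓝[>] (0:ℝ)) (𝓝 ((1 + β) ^ γ)) ∧
    ∀ θ : ℝ, 1 ≤ θ →
      Tendsto (fun x : ℝ =>
          (1 - Real.exp (-((x + D x) ^ (1 / θ)))) / (1 - Real.exp (-(x ^ (1 / θ)))))
        (𝓝[>] (0:ℝ)) (𝓝 ((1 + β) ^ (1 / θ))) :=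
  AMO_upper_tail_general G D c γ β hc hGdecay hDnonneg hβ hD
end
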